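/- arXiv:math/9909175 — 8 statements merged into one kernel-verified Lean document; each statement's English description precedes it below -/
import Mathlib

section
/- Let G be a finite commutative subgroup of SL(3, ℂ) such that every element g ∈ G has 1 as an eigenvalue and has order belonging to {1, 2, 3, 4, 6}. Then G is cyclic of order 1, 2, 3, 4, or 6, or G is isomorphic to (ℤ/2ℤ) × (ℤ/2ℤ). -/
open Module Polynomial

/-- Pure group theory: a finite group with three `ℂ`-valued characters whose product is `1`,
whose kernels cover the group and intersect trivially, and whose element orders lie in
`{1,2,3,4,6}`, is cyclic of order `1,2,3,4,6` or a Klein four-group. -/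
lemma grp_lemma {H : Type*} [Group H] [Finite H]
    (χ : Fin 3 → (H →* ℂ))
    (hdet : ∀ h, χ 0 h * χ 1 h * χ 2 h = 1)
    (hcov : ∀ h, ∃ i, χ i h = 1)
    (hfaith : ∀ h, (∀ i : Fin 3, χ i h = 1) → h = 1)
    (hord : ∀ h : H, orderOf h ∈ ({1, 2, 3, 4, 6} : Set ℕ)) :
    (IsCyclic H ∧ Nat.card H ∈ ({1, 2, 3, 4, 6} : Set ℕ)) ∨
      Nonempty (H ≃* Multiplicative (ZMod 2 × ZMod 2)) := by
  classical
  have covE : ∀ h : H, (∃ i, χ i h = 1) → χ 0 h = 1 ∨ χ 1 h = 1 ∨ χ 2 h = 1 := by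
    intro h ⟨i, hi⟩
    fin_cases i
    · exact Or.inl hi
    · exact Or.inr (Or.inl hi)
    · exact Or.inr (Or.inr hi)
  have hnz : ∀ (i : Fin 3) (h : H), χ i h ≠ 0 := by
    intro i h hz
    have hd := hdet h
    have h3 : χ 0 h = 0 ∨ χ 1 h = 0 ∨ χ 2 h = 0 := by
      fin_cases i
      · exact Or.inl hz
      · exact Or.inr (Or.inl hz)
      · exact Or.inr (Or.inr hz)
    rcases h3 with h0 | h0 | h0 <;> rw [h0] at hd <;> simp at hd
  have hinvmul : ∀ (i : Fin 3) (h : H), χ i h * χ i h⁻¹ = 1 := by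
    intro i h; rw [← map_mul, mul_inv_cancel, map_one]
  have key01 : ∀ h : H, χ 0 h = 1 → χ 1 h = 1 → h = 1 := by
    intro h h0 h1
    have hd := hdet h
    rw [h0, h1, one_mul, one_mul] at hd
    apply hfaith
    intro k
    fin_cases k
    · exact h0
    · exact h1
    · exact hd
  have key02 : ∀ h : H, χ 0 h = 1 → χ 2 h = 1 → h = 1 := by
    intro h h0 h2
    have hd := hdet h
    rw [h0, h2, one_mul, mul_one] at hd
    apply hfaith
    intro k
    fin_cases k
    · exact h0
    · exact hd
    · exact h2
  have key12 : ∀ h : H, χ 1 h = 1 → χ 2 h = 1 → h = 1 := by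
    intro h h1 h2
    have hd := hdet h
    rw [h1, h2, mul_one, mul_one] at hd
    apply hfaith
    intro k
    fin_cases k
    · exact hd
    · exact h1
    · exact h2
  by_cases hinj : ∃ i, Function.Injective (χ i)
  · obtain ⟨i, hi⟩ := hinj
    have hc : IsCyclic H := isCyclic_of_subgroup_isDomain (χ i) hi
    obtain ⟨g, hg⟩ := hc.exists_generator
    refine Or.inl ⟨hc, ?_⟩
    have hcg : Nat.card H = orderOf g := by
      haveI := Fintype.ofFinite H
      exact (orderOf_eq_card_of_forall_mem_zpowers hg).symm
    rw [hcg]; exact hord g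
  · push_neg at hinj
    have hex : ∀ i : Fin 3, ∃ a : H, a ≠ 1 ∧ χ i a = 1 := by
      intro i
      have h := hinj i
      rw [Function.not_injective_iff] at h
      obtain ⟨x, y, hxy, hne⟩ := h
      refine ⟨x * y⁻¹, by simpa [mul_inv_eq_one] using hne, ?_⟩
      rw [map_mul, hxy, hinvmul]
    obtain ⟨a, ha1, ha0⟩ := hex 0
    obtain ⟨b, hb1, hb0⟩ := hex 1
    obtain ⟨c, hc1, hc0⟩ := hex 2
    -- the other characters are nontrivial on a, b, c
    have ha1' : χ 1 a ≠ 1 := fun h => ha1 (key01 a ha0 h)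
    have ha2' : χ 2 a ≠ 1 := fun h => ha1 (key02 a ha0 h)
    have hb0' : χ 0 b ≠ 1 := fun h => hb1 (key01 b h hb0)
    have hb2' : χ 2 b ≠ 1 := fun h => hb1 (key12 b hb0 h)
    have hc0' : χ 0 c ≠ 1 := fun h => hc1 (key02 c h hc0)
    have hc1' : χ 1 c ≠ 1 := fun h => hc1 (key12 c h hc0)
    -- equality of all characters gives equality of elements
    have eqelt : ∀ x y : H, (∀ j : Fin 3, χ j x = χ j y) → x = y := by
      intro x y hall
      have h1 : ∀ j : Fin 3, χ j (x * y⁻¹) = 1 := by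
        intro j
        rw [map_mul, hall j, hinvmul]
      have h2 := hfaith _ h1
      rwa [mul_inv_eq_one] at h2
    -- two of the three characters determine the third
    have det02 : ∀ x y : H, χ 0 x = χ 0 y → χ 2 x = χ 2 y → x = y := by
      intro x y h0 h2
      have dx := hdet x
      have dy := hdet y
      rw [h0, h2] at dx
      have hne : χ 0 y * χ 2 y ≠ 0 := mul_ne_zero (hnz _ _) (hnz _ _)
      have h1 : χ 1 x = χ 1 y := by
        apply mul_right_cancel₀ hne
        linear_combination dx - dy
      apply eqelt
      intro l
      fin_cases l
      · exact h0
      · exact h1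
      · exact h2
    have det12 : ∀ x y : H, χ 1 x = χ 1 y → χ 2 x = χ 2 y → x = y := by
      intro x y h1 h2
      have dx := hdet x
      have dy := hdet y
      rw [h1, h2] at dx
      have hne : χ 1 y * χ 2 y ≠ 0 := mul_ne_zero (hnz _ _) (hnz _ _)
      have h0 : χ 0 x = χ 0 y := by
        apply mul_right_cancel₀ hne
        linear_combination dx - dy
      apply eqelt
      intro l
      fin_cases l
      · exact h0
      · exact h1
      · exact h2
    -- step lemmas
    have step0 : ∀ x : H, x ≠ 1 → χ 0 x = 1 → χ 2 x * χ 2 b = 1 := by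
      intro x hx hx0
      have e0 : χ 0 (x * b) = χ 0 b := by rw [map_mul, hx0, one_mul]
      have e1 : χ 1 (x * b) = χ 1 x := by rw [map_mul, hb0, mul_one]
      have hx1 : χ 1 x ≠ 1 := fun h => hx (key01 x hx0 h)
      rcases covE _ (hcov (x * b)) with hi | hi | hi
      · rw [e0] at hi; exact absurd hi hb0'
      · rw [e1] at hi; exact absurd hi hx1
      · rwa [map_mul] at hi
    have step1 : ∀ x : H, x ≠ 1 → χ 1 x = 1 → χ 2 x * χ 2 a = 1 := by
      intro x hx hx1
      have e0 : χ 0 (x * a) = χ 0 x := by rw [map_mul, ha0, mul_one]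
      have e1 : χ 1 (x * a) = χ 1 x * χ 1 a := map_mul _ _ _
      have hx0 : χ 0 x ≠ 1 := fun h => hx (key01 x h hx1)
      rcases covE _ (hcov (x * a)) with hi | hi | hi
      · rw [e0] at hi; exact absurd hi hx0
      · rw [e1, hx1, one_mul] at hi; exact absurd hi ha1'
      · rwa [map_mul] at hi
    have step2 : ∀ x : H, x ≠ 1 → χ 2 x = 1 → χ 1 x * χ 1 a = 1 := by
      intro x hx hx2
      have e0 : χ 0 (x * a) = χ 0 x := by rw [map_mul, ha0, mul_one]
      have e2 : χ 2 (x * a) = χ 2 a := by rw [map_mul, hx2, one_mul]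
      have hx0 : χ 0 x ≠ 1 := fun h => hx (key02 x h hx2)
      rcases covE _ (hcov (x * a)) with hi | hi | hi
      · rw [e0] at hi; exact absurd hi hx0
      · rwa [map_mul] at hi
      · rw [e2] at hi; exact absurd hi ha2'
    -- uniqueness in each kernel
    have uniq0 : ∀ x : H, x ≠ 1 → χ 0 x = 1 → x = a := by
      intro x hx hx0
      refine det02 x a (by rw [hx0, ha0]) ?_
      exact mul_right_cancel₀ (hnz 2 b) ((step0 x hx hx0).trans (step0 a ha1 ha0).symm)
    have uniq1 : ∀ x : H, x ≠ 1 → χ 1 x = 1 → x = b := by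
      intro x hx hx1
      refine det12 x b (by rw [hx1, hb0]) ?_
      exact mul_right_cancel₀ (hnz 2 a) ((step1 x hx hx1).trans (step1 b hb1 hb0).symm)
    have uniq2 : ∀ x : H, x ≠ 1 → χ 2 x = 1 → x = c := by
      intro x hx hx2
      refine det12 x c ?_ (by rw [hx2, hc0])
      exact mul_right_cancel₀ (hnz 1 a) ((step2 x hx hx2).trans (step2 c hc1 hc0).symm)
    have mem4 : ∀ x : H, x = 1 ∨ x = a ∨ x = b ∨ x = c := by
      intro x
      by_cases h1 : x = 1
      · exact Or.inl h1
      rcases covE _ (hcov x) with hi | hi | hi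
      · exact Or.inr (Or.inl (uniq0 x h1 hi))
      · exact Or.inr (Or.inr (Or.inl (uniq1 x h1 hi)))
      · exact Or.inr (Or.inr (Or.inr (uniq2 x h1 hi)))
    have hab : a ≠ b := fun h => hb0' (h ▸ ha0)
    have hac : a ≠ c := fun h => hc0' (h ▸ ha0)
    have hbc : b ≠ c := fun h => hc1' (h ▸ hb0)
    -- every element squares to 1
    have sq : ∀ x : H, x * x = 1 := by
      intro x
      rcases mem4 x with rfl | h | h | h
      · simp
      · rw [h]
        by_contra hcon
        have h2 : a * a = a := uniq0 (a * a) hcon (by rw [map_mul, ha0, one_mul])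
        exact ha1 (by rwa [mul_eq_right] at h2)
      · rw [h]
        by_contra hcon
        have h2 : b * b = b := uniq1 (b * b) hcon (by rw [map_mul, hb0, one_mul])
        exact hb1 (by rwa [mul_eq_right] at h2)
      · rw [h]
        by_contra hcon
        have h2 : c * c = c := uniq2 (c * c) hcon (by rw [map_mul, hc0, one_mul])
        exact hc1 (by rwa [mul_eq_right] at h2)
    -- cardinality
    haveI := Fintype.ofFinite H
    have huniv : (Finset.univ : Finset H) = {1, a, b, c} := by
      ext x
      simp only [Finset.mem_univ, true_iff, Finset.mem_insert, Finset.mem_singleton]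
      exact mem4 x
    have h1m : (1 : H) ∉ ({a, b, c} : Finset H) := by
      simp only [Finset.mem_insert, Finset.mem_singleton]
      push_neg
      exact ⟨fun h => ha1 h.symm, fun h => hb1 h.symm, fun h => hc1 h.symm⟩
    have ham : a ∉ ({b, c} : Finset H) := by
      simp only [Finset.mem_insert, Finset.mem_singleton]
      push_neg
      exact ⟨hab, hac⟩
    have hbm : b ∉ ({c} : Finset H) := by
      simpa using hbc
    have hcard : Nat.card H = 4 := by
      rw [Nat.card_eq_fintype_card, ← Finset.card_univ, huniv,
        Finset.card_insert_of_notMem h1m, Finset.card_insert_of_notMem ham,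
        Finset.card_insert_of_notMem hbm, Finset.card_singleton]
    -- exponent
    have hdvd : Monoid.exponent H ∣ 2 :=
      Monoid.exponent_dvd_of_forall_pow_eq_one (fun x => by rw [pow_two]; exact sq x)
    haveI : Nontrivial H := ⟨⟨a, 1, ha1⟩⟩
    have hexp : Monoid.exponent H = 2 := by
      have hlt := Monoid.one_lt_exponent (G := H)
      rcases (Nat.dvd_prime Nat.prime_two).mp hdvd with h | h
      · omega
      · exact h
    haveI : IsKleinFour H := ⟨hcard, hexp⟩
    exact Or.inr IsKleinFour.nonempty_mulEquiv

/-- Lemma (2.5) (linear-algebra form): a finite commutative subgroup of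
`SL(3, ℂ)` all of whose elements have `1` as an eigenvalue and order in
`{1, 2, 3, 4, 6}` is cyclic of order `1, 2, 3, 4` or `6`, or is a Klein
four-group. -/
theorem stmt_3 (G : Subgroup (Matrix.SpecialLinearGroup (Fin 3) ℂ))
    (hfin : Finite G)
    (hcomm : ∀ x ∈ G, ∀ y ∈ G, x * y = y * x)
    (heig : ∀ g ∈ G, ∃ v : Fin 3 → ℂ, v ≠ 0 ∧
      Matrix.mulVec (g : Matrix (Fin 3) (Fin 3) ℂ) v = v)
    (hord : ∀ g ∈ G, orderOf g ∈ ({1, 2, 3, 4, 6} : Set ℕ)) :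
    (IsCyclic G ∧ Nat.card G ∈ ({1, 2, 3, 4, 6} : Set ℕ)) ∨
      Nonempty (G ≃* Multiplicative (ZMod 2 × ZMod 2)) := by
  classical
  -- the endomorphism of `Fin 3 → ℂ` attached to an element of `G`
  let f : G → Module.End ℂ (Fin 3 → ℂ) := fun g =>
    Matrix.toLinAlgEquiv' ((g : Matrix.SpecialLinearGroup (Fin 3) ℂ) : Matrix (Fin 3) (Fin 3) ℂ)
  have fapp : ∀ (g : G) (v : Fin 3 → ℂ),
      f g v = Matrix.mulVec ((g : Matrix.SpecialLinearGroup (Fin 3) ℂ) : Matrix (Fin 3) (Fin 3) ℂ) v :=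
    fun g v => rfl
  have fmul : ∀ g h : G, f (g * h) = f g * f h := by
    intro g h
    have : (((g * h : G) : Matrix.SpecialLinearGroup (Fin 3) ℂ) : Matrix (Fin 3) (Fin 3) ℂ)
        = ((g : Matrix.SpecialLinearGroup (Fin 3) ℂ) : Matrix (Fin 3) (Fin 3) ℂ)
          * ((h : Matrix.SpecialLinearGroup (Fin 3) ℂ) : Matrix (Fin 3) (Fin 3) ℂ) := by
      push_cast
      rfl
    show Matrix.toLinAlgEquiv' _ = _
    rw [this, map_mul]
  have fone : f 1 = 1 := by
    show Matrix.toLinAlgEquiv' _ = 1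
    have : (((1 : G) : Matrix.SpecialLinearGroup (Fin 3) ℂ) : Matrix (Fin 3) (Fin 3) ℂ) = 1 := by
      push_cast
      rfl
    rw [this, map_one]
  -- every element of `G` has order dividing 12
  have fpow12 : ∀ g : G, (f g) ^ 12 = 1 := by
    intro g
    have hg : ((g : Matrix.SpecialLinearGroup (Fin 3) ℂ)) ^ 12 = 1 := by
      have h12 : orderOf (g : Matrix.SpecialLinearGroup (Fin 3) ℂ) ∣ 12 := by
        rcases hord _ g.2 with h | h | h | h | h <;> rw [h] <;> norm_num
      exact orderOf_dvd_iff_pow_eq_one.mp h12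
    have : (((g : Matrix.SpecialLinearGroup (Fin 3) ℂ) : Matrix (Fin 3) (Fin 3) ℂ)) ^ 12 = 1 := by
      rw [← Matrix.SpecialLinearGroup.coe_pow, hg]
      rfl
    calc (f g) ^ 12
        = Matrix.toLinAlgEquiv'
            ((((g : Matrix.SpecialLinearGroup (Fin 3) ℂ)) : Matrix (Fin 3) (Fin 3) ℂ) ^ 12) := by
          rw [map_pow]
      _ = 1 := by rw [this, map_one]
  -- each `f g` is (finitely) semisimple, so generalized eigenspaces are eigenspaces
  have hss : ∀ (g : G) (μ : ℂ), (f g).maxGenEigenspace μ = (f g).eigenspace μ := by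
    intro g μ
    have hsf : Squarefree (X ^ 12 - 1 : ℂ[X]) :=
      (Polynomial.X_pow_sub_one_separable_iff.mpr (by norm_num)).squarefree
    have haev : aeval (f g) (X ^ 12 - 1 : ℂ[X]) = 0 := by
      rw [map_sub, map_pow, aeval_X, map_one, fpow12 g, sub_self]
    exact ((Module.End.isSemisimple_of_squarefree_aeval_eq_zero hsf
      haev).isFinitelySemisimple).maxGenEigenspace_eq_eigenspace μ
  -- simultaneous triangularization
  have hcomm' : Pairwise fun g h : G => Commute (f g) (f h) := by
    intro g h _
    have hgh : g * h = h * g := Subtype.ext (hcomm _ g.2 _ h.2)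
    show f g * f h = f h * f g
    rw [← fmul, ← fmul, hgh]
  have hspan : ⨆ χ : G → ℂ, ⨅ g, (f g).maxGenEigenspace (χ g) = ⊤ :=
    Module.End.iSup_iInf_maxGenEigenspace_eq_top_of_iSup_maxGenEigenspace_eq_top_of_commute f
      hcomm' (fun g => Module.End.iSup_maxGenEigenspace_eq_top _)
  -- simultaneous eigenvectors span
  set S : Set (Fin 3 → ℂ) := {v | ∃ χ : G → ℂ, ∀ g, f g v = χ g • v} with hSdef
  have hS : ⊤ ≤ Submodule.span ℂ S := by
    rw [← hspan]
    apply iSup_le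
    intro χ
    intro v hv
    apply Submodule.subset_span
    refine ⟨χ, fun g => ?_⟩
    have hvg := (Submodule.mem_iInf _).mp hv g
    rw [hss] at hvg
    exact Module.End.mem_eigenspace_iff.mp hvg
  -- a basis of simultaneous eigenvectors
  let B := Basis.ofSpan hS
  haveI : Fintype ((linearIndepOn_empty ℂ id).extend (Set.empty_subset S)) :=
    FiniteDimensional.fintypeBasisIndex B
  have hcard3 : Fintype.card
      ((linearIndepOn_empty ℂ id).extend (Set.empty_subset S)) = 3 := by
    rw [← Module.finrank_eq_card_basis B]
    simp
  let e := Fintype.equivFinOfCardEq hcard3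
  let b := B.reindex e
  have hbS : ∀ i : Fin 3, ∃ χ : G → ℂ, ∀ g, f g (b i) = χ g • b i := by
    intro i
    have h1 : b i = ↑(e.symm i) := by
      rw [Basis.reindex_apply, Basis.ofSpan_apply_self]
    have h2 : (↑(e.symm i) : Fin 3 → ℂ) ∈ S :=
      (linearIndepOn_empty ℂ id).extend_subset (Set.empty_subset S) (e.symm i).2
    rw [h1]
    exact h2
  choose w hw using hbS
  have hbnz : ∀ i, b i ≠ 0 := fun i => b.ne_zero i
  have winj : ∀ (i : Fin 3) (x y : ℂ), x • b i = y • b i → x = y := by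
    intro i x y hxy
    exact smul_left_injective ℂ (hbnz i) hxy
  have hone : ∀ i, w i 1 = 1 := by
    intro i
    apply winj i
    rw [← hw i 1, fone, one_smul]
    rfl
  have hmulw : ∀ (i : Fin 3) (g h : G), w i (g * h) = w i g * w i h := by
    intro i g h
    apply winj i
    rw [← hw i (g * h), fmul]
    show f g (f h (b i)) = (w i g * w i h) • b i
    rw [hw i h, map_smul, hw i g, smul_smul, mul_comm]
  let χ : Fin 3 → (G →* ℂ) := fun i => ⟨⟨w i, hone i⟩, hmulw i⟩
  -- matrix of `f g` in basis `b` is diagonal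
  have hmat : ∀ g : G, LinearMap.toMatrix b b (f g) = Matrix.diagonal (fun i => w i g) := by
    intro g
    ext i j
    rw [LinearMap.toMatrix_apply, hw j g]
    rw [map_smul, Basis.repr_self]
    by_cases h : i = j
    · subst h; simp
    · simp [Finsupp.single_apply, Matrix.diagonal_apply, h, Ne.symm h]
  -- determinant condition
  have hdet : ∀ g : G, w 0 g * w 1 g * w 2 g = 1 := by
    intro g
    have h1 : LinearMap.det (f g) = 1 := by
      have hAlg : f g = Matrix.toLin'
          (((g : Matrix.SpecialLinearGroup (Fin 3) ℂ) : Matrix (Fin 3) (Fin 3) ℂ)) := by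
        apply LinearMap.ext
        intro v
        rw [Matrix.toLin'_apply]
        exact fapp g v
      rw [hAlg, LinearMap.det_toLin']
      exact (g : Matrix.SpecialLinearGroup (Fin 3) ℂ).2
    have h2 : LinearMap.det (f g) = (Matrix.diagonal (fun i => w i g)).det := by
      rw [← LinearMap.det_toMatrix b, hmat]
    rw [h2, Matrix.det_diagonal, Fin.prod_univ_three] at h1
    exact h1
  -- eigenvalue-1 condition
  have hcov : ∀ g : G, ∃ i, w i g = 1 := by
    intro g
    obtain ⟨v, hv0, hv⟩ := heig _ g.2
    have hfv : f g v = v := by rw [fapp]; exact hv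
    have hrep := LinearMap.toMatrix_mulVec_repr b b (f g) v
    rw [hmat] at hrep
    have hvr : b.repr v ≠ 0 := fun h => hv0 (by simpa using (b.repr.map_eq_zero_iff).mp h)
    obtain ⟨i, hi⟩ : ∃ i, b.repr v i ≠ 0 := by
      by_contra h
      push_neg at h
      exact hvr (Finsupp.ext h)
    refine ⟨i, ?_⟩
    have hcoord := congrFun hrep i
    rw [Matrix.mulVec_diagonal, hfv] at hcoord
    exact mul_right_cancel₀ hi (by rw [hcoord, one_mul])
  -- faithfulness
  have hfaith : ∀ g : G, (∀ i : Fin 3, w i g = 1) → g = 1 := by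
    intro g hg
    have hfg : f g = 1 := by
      apply b.ext
      intro i
      rw [hw i g, hg i, one_smul]
      rfl
    have hM : (((g : Matrix.SpecialLinearGroup (Fin 3) ℂ)) : Matrix (Fin 3) (Fin 3) ℂ) = 1 := by
      apply Matrix.toLinAlgEquiv'.injective
      rw [map_one]
      exact hfg
    have hSL : (g : Matrix.SpecialLinearGroup (Fin 3) ℂ) = 1 := by
      ext i j
      rw [hM]
      rfl
    exact Subtype.ext hSL
  -- element orders
  have hord' : ∀ g : G, orderOf g ∈ ({1, 2, 3, 4, 6} : Set ℕ) := by
    intro g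
    rw [← Subgroup.orderOf_coe g]
    exact hord _ g.2
  exact grp_lemma χ (fun h => hdet h) hcov hfaith hord'
end

section
/- Let Q₈ = ⟨a, b ∣ a⁴ = 1, a² = b², b⁻¹ a b = a⁻¹⟩ be the quaternion group of order 8. For every injective group homomorphism ρ : Q₈ → SL(3, ℂ) there exists a nonzero vector v ∈ ℂ³ with ρ(g)·v = v for every g ∈ Q₈. -/
section AuxLemmas
open Module LinearMap

lemma aux_mat2 (N : Matrix (Fin 2) (Fin 2) ℂ) (h2 : N * N = -1) (hdet : N.det = -1) :
    ∃ c : ℂ, N = c • 1 := by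
  have e00 := congrFun (congrFun h2 0) 0
  have e01 := congrFun (congrFun h2 0) 1
  have e10 := congrFun (congrFun h2 1) 0
  simp [Matrix.mul_apply, Fin.sum_univ_two, Matrix.one_apply] at e00 e01 e10
  rw [Matrix.det_fin_two] at hdet
  by_cases ht : N 0 0 + N 1 1 = 0
  · exfalso
    have hd : N 1 1 = -(N 0 0) := by linear_combination ht
    rw [hd] at hdet
    have : (0 : ℂ) = 2 := by linear_combination -hdet - e00
    norm_num at this
  · have hb : N 0 1 = 0 := by
      rcases mul_eq_zero.mp (show N 0 1 * (N 0 0 + N 1 1) = 0 by linear_combination e01) with h | h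
      · exact h
      · exact absurd h ht
    have hc : N 1 0 = 0 := by
      rcases mul_eq_zero.mp (show N 1 0 * (N 0 0 + N 1 1) = 0 by linear_combination e10) with h | h
      · exact h
      · exact absurd h ht
    have ha2 : N 0 0 * N 0 0 = -1 := by rw [hb] at e00; linear_combination e00
    have had : N 0 0 * N 1 1 = -1 := by rw [hb, hc] at hdet; linear_combination hdet
    have heq : N 1 1 = N 0 0 := by
      have hne : N 0 0 ≠ 0 := by
        intro h; rw [h] at ha2; norm_num at ha2
      have : N 0 0 * N 1 1 = N 0 0 * N 0 0 := by rw [had, ha2]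
      exact mul_left_cancel₀ hne this
    refine ⟨N 0 0, ?_⟩
    ext i j
    fin_cases i <;> fin_cases j <;>
      simp [Matrix.one_apply, hb, hc, heq]

lemma aux_det_prodMap {M₁ M₂ : Type*} [AddCommGroup M₁] [AddCommGroup M₂]
    [Module ℂ M₁] [Module ℂ M₂] [FiniteDimensional ℂ M₁] [FiniteDimensional ℂ M₂]
    (φ : Module.End ℂ M₁) (ψ : Module.End ℂ M₂) :
    LinearMap.det (φ.prodMap ψ) = LinearMap.det φ * LinearMap.det ψ := by
  let b₁ := Module.finBasis ℂ M₁
  let b₂ := Module.finBasis ℂ M₂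
  rw [← LinearMap.det_toMatrix (b₁.prod b₂), LinearMap.toMatrix_prodMap b₁ b₂ φ ψ,
    Matrix.det_fromBlocks_zero₂₁, LinearMap.det_toMatrix, LinearMap.det_toMatrix]

lemma aux_det_split {V : Type*} [AddCommGroup V] [Module ℂ V] [FiniteDimensional ℂ V]
    {K₁ K₂ : Submodule ℂ V} (hcompl : IsCompl K₁ K₂) (h : Module.End ℂ V)
    (hm₁ : ∀ x ∈ K₁, h x ∈ K₁) (hm₂ : ∀ x ∈ K₂, h x ∈ K₂) :
    LinearMap.det h = LinearMap.det (h.restrict hm₁) * LinearMap.det (h.restrict hm₂) := by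
  rw [← aux_det_prodMap]
  let e := Submodule.prodEquivOfIsCompl K₁ K₂ hcompl
  have key : h = (e : (K₁ × K₂) →ₗ[ℂ] V) ∘ₗ ((h.restrict hm₁).prodMap (h.restrict hm₂)) ∘ₗ
      (e.symm : V →ₗ[ℂ] (K₁ × K₂)) := by
    apply LinearMap.ext
    intro x
    obtain ⟨⟨x₁, x₂⟩, rfl⟩ := e.surjective x
    simp only [LinearMap.comp_apply, LinearEquiv.coe_coe, LinearEquiv.symm_apply_apply]
    show h (e (x₁, x₂)) = e ((h.restrict hm₁) x₁, (h.restrict hm₂) x₂)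
    rw [Submodule.coe_prodEquivOfIsCompl', Submodule.coe_prodEquivOfIsCompl']
    simp [map_add, LinearMap.restrict_coe_apply]
  conv_lhs => rw [key]
  exact LinearMap.det_conj _ e

lemma endo_key {V : Type*} [AddCommGroup V] [Module ℂ V] [FiniteDimensional ℂ V]
    (hdim : Module.finrank ℂ V = 3) (f g : Module.End ℂ V)
    (hf4 : f ^ 4 = 1) (hg2 : g * g = f ^ 2)
    (hdf : LinearMap.det f = 1) (hdg : LinearMap.det g = 1)
    (hzne : f ^ 2 ≠ 1) (hfg : f * g ≠ g * f) :
    ∃ v : V, v ≠ 0 ∧ f v = v ∧ g v = v := by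
  set z := f ^ 2 with hz
  have hzz : ∀ x : V, z (z x) = x := by
    intro x
    have : z * z = 1 := by rw [hz, ← pow_add]; exact hf4
    calc z (z x) = (z * z) x := rfl
    _ = x := by rw [this]; rfl
  set K₁ := LinearMap.ker (z - 1) with hK₁
  set K₂ := LinearMap.ker (z + 1) with hK₂
  have mem₁ : ∀ x : V, x ∈ K₁ ↔ z x = x := by
    intro x
    simp [hK₁, LinearMap.mem_ker, sub_eq_zero]
  have mem₂ : ∀ x : V, x ∈ K₂ ↔ z x = -x := by
    intro x
    rw [hK₂, LinearMap.mem_ker, LinearMap.add_apply, Module.End.one_apply,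
      add_eq_zero_iff_eq_neg]
  have hzf : ∀ x : V, z (f x) = f (z x) := by
    intro x
    have : z * f = f * z := by rw [hz]; exact ((Commute.refl f).pow_left 2).eq
    calc z (f x) = (z * f) x := rfl
    _ = (f * z) x := by rw [this]
    _ = f (z x) := rfl
  have hzg : ∀ x : V, z (g x) = g (z x) := by
    intro x
    have : z * g = g * z := by rw [← hg2]; exact mul_assoc g g g
    calc z (g x) = (z * g) x := rfl
    _ = (g * z) x := by rw [this]
    _ = g (z x) := rfl
  have fm₁ : ∀ x ∈ K₁, f x ∈ K₁ := fun x hx => by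
    rw [mem₁] at hx ⊢; rw [hzf x, hx]
  have fm₂ : ∀ x ∈ K₂, f x ∈ K₂ := fun x hx => by
    rw [mem₂] at hx ⊢; rw [hzf x, hx, map_neg]
  have gm₁ : ∀ x ∈ K₁, g x ∈ K₁ := fun x hx => by
    rw [mem₁] at hx ⊢; rw [hzg x, hx]
  have gm₂ : ∀ x ∈ K₂, g x ∈ K₂ := fun x hx => by
    rw [mem₂] at hx ⊢; rw [hzg x, hx, map_neg]
  have zm₁ : ∀ x ∈ K₁, z x ∈ K₁ := fun x hx => by
    rw [mem₁] at hx ⊢; rw [hx]; exact hx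
  have zm₂ : ∀ x ∈ K₂, z x ∈ K₂ := fun x hx => by
    rw [mem₂] at hx ⊢; rw [hx, map_neg, hx]
  have decomp : ∀ x : V, ∃ x₁ ∈ K₁, ∃ x₂ ∈ K₂, x₁ + x₂ = x := by
    intro x
    refine ⟨(2⁻¹ : ℂ) • (x + z x), ?_, (2⁻¹ : ℂ) • (x - z x), ?_, ?_⟩
    · rw [mem₁, map_smul, map_add, hzz]
      module
    · rw [mem₂, map_smul, map_sub, hzz]
      module
    · module
  have hcompl : IsCompl K₁ K₂ := by
    constructor
    · rw [disjoint_iff_inf_le]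
      rintro x ⟨hx₁, hx₂⟩
      have h1 := (mem₁ x).mp hx₁
      have h2 := (mem₂ x).mp hx₂
      rw [h1] at h2
      have : (2 : ℂ) • x = 0 := by
        rw [two_smul]
        nth_rewrite 2 [h2]
        simp
      simpa using this
    · rw [codisjoint_iff_le_sup]
      intro x _
      obtain ⟨x₁, h₁, x₂, h₂, hsum⟩ := decomp x
      exact hsum ▸ Submodule.add_mem_sup h₁ h₂
  have hdims : finrank ℂ K₁ + finrank ℂ K₂ = 3 := by
    rw [← hdim]; exact Submodule.finrank_add_eq_of_isCompl hcompl
  -- z restricted to K₂ is -1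
  have hz₂ : z.restrict zm₂ = -1 := by
    apply LinearMap.ext; intro x
    apply Subtype.ext
    show z x = -x
    exact (mem₂ x).mp x.2
  have hz₁ : z.restrict zm₁ = 1 := by
    apply LinearMap.ext; intro x
    apply Subtype.ext
    show z x = x
    exact (mem₁ x).mp x.2
  have hdetz : LinearMap.det z = 1 := by
    rw [hz, pow_two, Module.End.mul_eq_comp, LinearMap.det_comp, hdf, mul_one]
  have hn₂even : (-1 : ℂ) ^ (finrank ℂ K₂) = 1 := by
    have := aux_det_split hcompl z zm₁ zm₂
    rw [hdetz, hz₁, hz₂] at this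
    have hdet1 : LinearMap.det (1 : Module.End ℂ K₁) = 1 := LinearMap.det_id
    have hdetneg : LinearMap.det (-1 : Module.End ℂ K₂) = (-1 : ℂ) ^ finrank ℂ K₂ := by
      have e : (-1 : Module.End ℂ K₂) = (-1 : ℂ) • (1 : Module.End ℂ K₂) :=
        (neg_one_smul ℂ (1 : Module.End ℂ K₂)).symm
      have d1 : LinearMap.det (1 : Module.End ℂ K₂) = 1 := LinearMap.det_id
      rw [e, LinearMap.det_smul, d1, mul_one]
    rw [hdet1, hdetneg, one_mul] at this
    exact this.symm
  have hK₁netop : K₁ ≠ ⊤ := by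
    intro h
    apply hzne
    apply LinearMap.ext; intro x
    have : x ∈ K₁ := h ▸ Submodule.mem_top
    exact (mem₁ x).mp this
  have hn₂ : finrank ℂ K₂ = 2 := by
    have hle : finrank ℂ K₂ ≤ 3 := by omega
    interval_cases h : finrank ℂ K₂
    · exfalso
      apply hK₁netop
      apply Submodule.eq_top_of_finrank_eq
      rw [hdim]; omega
    · exfalso; norm_num at hn₂even
    · rfl
    · exfalso; norm_num at hn₂even
  have hn₁ : finrank ℂ K₁ = 1 := by omega
  obtain ⟨v₀, hv₀, hspan⟩ := (finrank_eq_one_iff' (K := ℂ) (V := K₁)).mp hn₁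
  have hv₀V : (v₀ : V) ≠ 0 := fun h => hv₀ (Subtype.ext h)
  -- every K₁-preserving map is scalar on K₁
  have scalar₁ : ∀ (h : Module.End ℂ V), (∀ x ∈ K₁, h x ∈ K₁) →
      ∃ δ : ℂ, ∀ x ∈ K₁, h x = δ • x := by
    intro h hm₁
    obtain ⟨δ, hδ⟩ := hspan (⟨h v₀, hm₁ v₀ v₀.2⟩ : K₁)
    refine ⟨δ, fun x hx => ?_⟩
    obtain ⟨c, hc⟩ := hspan ⟨x, hx⟩
    have hx' : c • (v₀ : V) = x := by
      simpa using congrArg Subtype.val hc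
    have hδ' : h (v₀ : V) = δ • (v₀ : V) := by
      simpa using (congrArg Subtype.val hδ).symm
    calc h x = h (c • (v₀ : V)) := by rw [hx']
    _ = c • h (v₀ : V) := map_smul h c _
    _ = c • δ • (v₀ : V) := by rw [hδ']
    _ = δ • c • (v₀ : V) := smul_comm c δ _
    _ = δ • x := by rw [hx']
  have key : ∀ h : Module.End ℂ V, h * h = z → LinearMap.det h = 1 →
      (∀ x ∈ K₁, h x ∈ K₁) → (∀ x ∈ K₂, h x ∈ K₂) →
      (∀ k : Module.End ℂ V, (∀ x ∈ K₁, k x ∈ K₁) → (∀ x ∈ K₂, k x ∈ K₂) → h * k = k * h) ∨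
        (∀ x ∈ K₁, h x = x) := by
    intro h hh2 hdet hm₁ hm₂
    obtain ⟨δ, hδ⟩ := scalar₁ h hm₁
    have hδ2 : δ * δ = 1 := by
      have h1 : h (h (v₀ : V)) = (v₀ : V) := by
        have : h (h (v₀ : V)) = z (v₀ : V) := by
          calc h (h (v₀ : V)) = (h * h) (v₀ : V) := rfl
          _ = z (v₀ : V) := by rw [hh2]
        rw [this]
        exact (mem₁ _).mp v₀.2
      have h2 : h (h (v₀ : V)) = (δ * δ) • (v₀ : V) := by
        rw [hδ _ v₀.2, map_smul, hδ _ v₀.2, smul_smul]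
      rw [h2] at h1
      have : (δ * δ - 1) • (v₀ : V) = 0 := by
        rw [sub_smul, one_smul, h1, sub_self]
      rcases smul_eq_zero.mp this with h | h
      · linear_combination h
      · exact absurd h hv₀V
    by_cases hδ1 : δ = 1
    · right
      intro x hx
      rw [hδ x hx, hδ1, one_smul]
    · left
      have hδm : δ = -1 := by
        have : (δ - 1) * (δ + 1) = 0 := by linear_combination hδ2
        rcases mul_eq_zero.mp this with h | h
        · exact absurd (by linear_combination h) hδ1
        · linear_combination h
      -- determinant of restriction to K₁ is δ
      have hr₁ : h.restrict hm₁ = δ • 1 := by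
        apply LinearMap.ext; intro x
        apply Subtype.ext
        show h x = δ • x
        exact hδ x x.2
      have hd₁ : LinearMap.det (h.restrict hm₁) = δ := by
        have d1 : LinearMap.det (1 : Module.End ℂ K₁) = 1 := LinearMap.det_id
        rw [hr₁, LinearMap.det_smul, d1, hn₁, pow_one, mul_one]
      have hsplit := aux_det_split hcompl h hm₁ hm₂
      rw [hdet, hd₁, hδm] at hsplit
      have hd₂ : LinearMap.det (h.restrict hm₂) = -1 := by linear_combination hsplit
      have hsq : (h.restrict hm₂) * (h.restrict hm₂) = -1 := by
        apply LinearMap.ext; intro x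
        apply Subtype.ext
        show h (h x) = -x
        calc h (h (x : V)) = (h * h) (x : V) := rfl
        _ = z (x : V) := by rw [hh2]
        _ = -(x : V) := (mem₂ _).mp x.2
      let b : Basis (Fin 2) ℂ K₂ := Module.finBasisOfFinrankEq ℂ K₂ hn₂
      set N := LinearMap.toMatrix b b (h.restrict hm₂) with hN
      have hN2 : N * N = -1 := by
        rw [hN, ← LinearMap.toMatrix_mul b, hsq, map_neg, LinearMap.toMatrix_one b]
      have hNdet : N.det = -1 := by
        rw [hN, LinearMap.det_toMatrix]
        exact hd₂
      obtain ⟨c, hc⟩ := aux_mat2 N hN2 hNdet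
      have hr₂ : h.restrict hm₂ = c • 1 := by
        apply (LinearMap.toMatrix b b).injective
        rw [← hN, hc, map_smul, LinearMap.toMatrix_one b]
      have hscal₂ : ∀ x ∈ K₂, h x = c • x := by
        intro x hx
        have := congrArg Subtype.val (DFunLike.congr_fun hr₂ ⟨x, hx⟩)
        simpa using this
      intro k hk₁ hk₂
      apply LinearMap.ext; intro x
      obtain ⟨x₁, h₁, x₂, h₂, rfl⟩ := decomp x
      show h (k (x₁ + x₂)) = k (h (x₁ + x₂))
      rw [map_add, map_add, map_add, map_add,
        hδ x₁ h₁, hscal₂ x₂ h₂,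
        hδ (k x₁) (hk₁ x₁ h₁), hscal₂ (k x₂) (hk₂ x₂ h₂),
        map_smul, map_smul]
  have hff : f * f = z := by rw [hz, pow_two]
  rcases key f hff hdf fm₁ fm₂ with hcomm | hffix
  · exact absurd (hcomm g gm₁ gm₂) hfg
  rcases key g hg2 hdg gm₁ gm₂ with hcomm | hgfix
  · exact absurd (hcomm f fm₁ fm₂).symm hfg
  exact ⟨(v₀ : V), hv₀V, hffix _ v₀.2, hgfix _ v₀.2⟩

end AuxLemmas

section Main
open Module LinearMap Matrix

/-- Lemma (2.11) for `G ≅ Q₈`: every faithful 3-dimensional representation of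
the quaternion group of order 8 with values in `SL(3, ℂ)` has a nonzero
invariant vector. -/
theorem stmt_6 (ρ : QuaternionGroup 2 →* Matrix.SpecialLinearGroup (Fin 3) ℂ)
    (hinj : Function.Injective ρ) :
    ∃ v : Fin 3 → ℂ, v ≠ 0 ∧
      ∀ g : QuaternionGroup 2, Matrix.mulVec (ρ g : Matrix (Fin 3) (Fin 3) ℂ) v = v := by
  classical
  set A : Matrix (Fin 3) (Fin 3) ℂ := (ρ (QuaternionGroup.a 1) : Matrix (Fin 3) (Fin 3) ℂ) with hA
  set B : Matrix (Fin 3) (Fin 3) ℂ := (ρ (QuaternionGroup.xa 0) : Matrix (Fin 3) (Fin 3) ℂ) with hB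
  -- group facts
  have q1 : (QuaternionGroup.a 1 : QuaternionGroup 2) ^ 4 = 1 := by decide
  have q2 : (QuaternionGroup.xa 0 : QuaternionGroup 2) * QuaternionGroup.xa 0 =
      (QuaternionGroup.a 1) ^ 2 := by decide
  have q3 : (QuaternionGroup.a 1 : QuaternionGroup 2) ^ 2 ≠ 1 := by decide
  have q4 : (QuaternionGroup.a 1 : QuaternionGroup 2) * QuaternionGroup.xa 0 ≠
      QuaternionGroup.xa 0 * QuaternionGroup.a 1 := by decide
  have q5 : ∀ i : ZMod 4, (QuaternionGroup.a i : QuaternionGroup 2) =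
      (QuaternionGroup.a 1) ^ (i.val) := by decide
  have q6 : ∀ i : ZMod 4, (QuaternionGroup.xa i : QuaternionGroup 2) =
      (QuaternionGroup.a 1) ^ ((-i).val) * QuaternionGroup.xa 0 := by decide
  -- matrix facts
  have hA4 : A ^ 4 = 1 := by
    rw [hA, ← Matrix.SpecialLinearGroup.coe_pow, ← _root_.map_pow, q1, _root_.map_one,
      Matrix.SpecialLinearGroup.coe_one]
  have hB2 : B * B = A ^ 2 := by
    rw [hA, hB, ← Matrix.SpecialLinearGroup.coe_mul, ← Matrix.SpecialLinearGroup.coe_pow,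
      ← _root_.map_mul, ← _root_.map_pow, q2]
  have hdetA : A.det = 1 := (ρ (QuaternionGroup.a 1)).prop
  have hdetB : B.det = 1 := (ρ (QuaternionGroup.xa 0)).prop
  have hA2 : A ^ 2 ≠ 1 := by
    intro h
    apply q3
    apply hinj
    apply Subtype.ext
    rw [_root_.map_pow, _root_.map_one, Matrix.SpecialLinearGroup.coe_pow, Matrix.SpecialLinearGroup.coe_one]
    exact h
  have hABne : A * B ≠ B * A := by
    intro h
    apply q4
    apply hinj
    apply Subtype.ext
    rw [_root_.map_mul, _root_.map_mul, Matrix.SpecialLinearGroup.coe_mul, Matrix.SpecialLinearGroup.coe_mul]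
    exact h
  -- pass to endomorphisms
  let φ : Matrix (Fin 3) (Fin 3) ℂ ≃ₐ[ℂ] Module.End ℂ (Fin 3 → ℂ) := Matrix.toLinAlgEquiv'
  have hdim : Module.finrank ℂ (Fin 3 → ℂ) = 3 := by simp
  have happ : ∀ (M : Matrix (Fin 3) (Fin 3) ℂ) (w : Fin 3 → ℂ), φ M w = M *ᵥ w := fun M w => rfl
  obtain ⟨v, hv, hfv, hgv⟩ := endo_key hdim (φ A) (φ B)
    (by rw [← _root_.map_pow, hA4, _root_.map_one])
    (by rw [← _root_.map_mul, ← _root_.map_pow, hB2])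
    (by rw [show φ A = Matrix.toLin' A from rfl, LinearMap.det_toLin']; exact hdetA)
    (by rw [show φ B = Matrix.toLin' B from rfl, LinearMap.det_toLin']; exact hdetB)
    (by rw [← _root_.map_pow, ← _root_.map_one φ]; exact fun h => hA2 (φ.injective h))
    (by rw [← _root_.map_mul, ← _root_.map_mul]; exact fun h => hABne (φ.injective h))
  have hAv : A *ᵥ v = v := hfv
  have hBv : B *ᵥ v = v := hgv
  have hpow : ∀ (M : Matrix (Fin 3) (Fin 3) ℂ), M *ᵥ v = v → ∀ k : ℕ, M ^ k *ᵥ v = v := by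
    intro M hM k
    induction k with
    | zero => simp
    | succ n ih => rw [pow_succ, ← Matrix.mulVec_mulVec, hM]; exact ih
  refine ⟨v, hv, ?_⟩
  intro g
  cases g with
  | a i =>
    rw [q5 i, _root_.map_pow, Matrix.SpecialLinearGroup.coe_pow]
    exact hpow A hAv i.val
  | xa i =>
    rw [q6 i, _root_.map_mul, _root_.map_pow, Matrix.SpecialLinearGroup.coe_mul,
      Matrix.SpecialLinearGroup.coe_pow, ← Matrix.mulVec_mulVec, hBv]
    exact hpow A hAv (-i).val

end Main
end

section
/- Let Q₁₂ = ⟨a, b ∣ a⁶ = 1, a³ = b², b⁻¹ a b = a⁻¹⟩ be the binary dihedral (dicyclic) group of order 12. For every injective group homomorphism ρ : Q₁₂ → SL(3, ℂ) there exists a nonzero vector v ∈ ℂ³ with ρ(g)·v = v for every g ∈ Q₁₂. -/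
open Matrix Polynomial

private lemma stmt7_eval_charpoly (A : Matrix (Fin 3) (Fin 3) ℂ) (r : ℂ) :
    A.charpoly.eval r = (Matrix.scalar (Fin 3) r - A).det := by
  rw [Matrix.charpoly, eval_det, matPolyEquiv_charmatrix]
  simp

/-- Lemma (2.11) for `G ≅ Q₁₂`: every faithful 3-dimensional representation of
the binary dihedral (dicyclic) group of order 12 with values in `SL(3, ℂ)` has
a nonzero invariant vector. -/
theorem stmt_7 (ρ : QuaternionGroup 3 →* Matrix.SpecialLinearGroup (Fin 3) ℂ)
    (hinj : Function.Injective ρ) :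
    ∃ v : Fin 3 → ℂ, v ≠ 0 ∧
      ∀ g : QuaternionGroup 3, Matrix.mulVec (ρ g : Matrix (Fin 3) (Fin 3) ℂ) v = v := by
  classical
  set A : Matrix (Fin 3) (Fin 3) ℂ := (ρ (QuaternionGroup.a 1) : Matrix (Fin 3) (Fin 3) ℂ) with hAdef
  set A' : Matrix (Fin 3) (Fin 3) ℂ := (ρ (QuaternionGroup.a (-1)) : Matrix (Fin 3) (Fin 3) ℂ) with hA'def
  set B : Matrix (Fin 3) (Fin 3) ℂ := (ρ (QuaternionGroup.xa 0) : Matrix (Fin 3) (Fin 3) ℂ) with hBdef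
  set B' : Matrix (Fin 3) (Fin 3) ℂ := (((ρ (QuaternionGroup.xa 0))⁻¹ : Matrix.SpecialLinearGroup (Fin 3) ℂ) : Matrix (Fin 3) (Fin 3) ℂ) with hB'def
  have hg1 : (QuaternionGroup.a 1 * QuaternionGroup.a (-1) : QuaternionGroup 3) = 1 := by decide
  have hg2 : (QuaternionGroup.a (-1) * QuaternionGroup.a 1 : QuaternionGroup 3) = 1 := by decide
  have hg3 : (QuaternionGroup.xa 0 * QuaternionGroup.xa 0 : QuaternionGroup 3)
      = QuaternionGroup.a 1 * (QuaternionGroup.a 1 * QuaternionGroup.a 1) := by decide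
  have hg4 : (QuaternionGroup.a 1 * QuaternionGroup.xa 0 : QuaternionGroup 3)
      = QuaternionGroup.xa 0 * QuaternionGroup.a (-1) := by decide
  have hg5 : ((QuaternionGroup.a 1 : QuaternionGroup 3)) ^ 6 = 1 := by
    rw [QuaternionGroup.a_one_pow]; decide
  have hg6 : (QuaternionGroup.a 1 : QuaternionGroup 3) ≠ 1 := by decide
  have hg7 : (QuaternionGroup.a 1 * QuaternionGroup.a 1 : QuaternionGroup 3) ≠ 1 := by decide
  have hg8 : (QuaternionGroup.a 1 * (QuaternionGroup.a 1 * QuaternionGroup.a 1) : QuaternionGroup 3) ≠ 1 := by decide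
  have hAA' : A * A' = 1 := by
    rw [hAdef, hA'def, ← Matrix.SpecialLinearGroup.coe_mul, ← _root_.map_mul, hg1, _root_.map_one,
      Matrix.SpecialLinearGroup.coe_one]
  have hA'A : A' * A = 1 := by
    rw [hAdef, hA'def, ← Matrix.SpecialLinearGroup.coe_mul, ← _root_.map_mul, hg2, _root_.map_one,
      Matrix.SpecialLinearGroup.coe_one]
  have hBB : B * B = A * (A * A) := by
    rw [hAdef, hBdef, ← Matrix.SpecialLinearGroup.coe_mul, ← _root_.map_mul, hg3, _root_.map_mul,
      _root_.map_mul, Matrix.SpecialLinearGroup.coe_mul, Matrix.SpecialLinearGroup.coe_mul]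
  have hAB : A * B = B * A' := by
    rw [hAdef, hA'def, hBdef, ← Matrix.SpecialLinearGroup.coe_mul, ← _root_.map_mul, hg4,
      _root_.map_mul, Matrix.SpecialLinearGroup.coe_mul]
  have hB'B : B' * B = 1 := by
    rw [hBdef, hB'def, ← Matrix.SpecialLinearGroup.coe_mul, inv_mul_cancel,
      Matrix.SpecialLinearGroup.coe_one]
  have hBB' : B * B' = 1 := by
    rw [hBdef, hB'def, ← Matrix.SpecialLinearGroup.coe_mul, mul_inv_cancel,
      Matrix.SpecialLinearGroup.coe_one]
  have hA6 : A ^ 6 = 1 := by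
    rw [hAdef, ← Matrix.SpecialLinearGroup.coe_pow, ← map_pow, hg5, _root_.map_one,
      Matrix.SpecialLinearGroup.coe_one]
  have hdA : A.det = 1 := (ρ (QuaternionGroup.a 1)).2
  have hdA' : A'.det = 1 := (ρ (QuaternionGroup.a (-1))).2
  have hdB : B.det = 1 := (ρ (QuaternionGroup.xa 0)).2
  have hdB' : B'.det = 1 := ((ρ (QuaternionGroup.xa 0))⁻¹).2
  have hinj' : ∀ g : QuaternionGroup 3, (ρ g : Matrix (Fin 3) (Fin 3) ℂ) = 1 → g = 1 := by
    intro g hg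
    apply hinj
    apply Subtype.coe_injective
    show (ρ g : Matrix (Fin 3) (Fin 3) ℂ) = (ρ 1 : Matrix (Fin 3) (Fin 3) ℂ)
    rw [hg, _root_.map_one, Matrix.SpecialLinearGroup.coe_one]
  -- det (A - 1) = 0
  have hdet1 : (A - 1).det = 0 := by
    have e1 : B * A' * B' = A := by
      rw [← hAB, mul_assoc, hBB', mul_one]
    have e2 : A - 1 = B * (A' - 1) * B' := by
      rw [mul_sub, sub_mul, mul_one, e1, hBB']
    have e3 : A' - 1 = A' * (1 - A) := by
      rw [mul_sub, mul_one, hA'A]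
    have h4 : (A - 1).det = (1 - A).det := by
      rw [e2, det_mul, det_mul, e3, det_mul, hdA', hdB, hdB']; ring
    have h5 : (1 - A).det = - (A - 1).det := by
      rw [← neg_sub A 1, det_neg]
      norm_num
    have h6 := h4.trans h5
    linear_combination h6 / 2
  obtain ⟨v, hv0, hvA⟩ := Matrix.exists_mulVec_eq_zero_iff.2 hdet1
  have hAv : A.mulVec v = v := by
    rw [Matrix.sub_mulVec, Matrix.one_mulVec, sub_eq_zero] at hvA
    exact hvA
  have powfix : ∀ (M : Matrix (Fin 3) (Fin 3) ℂ) (x : Fin 3 → ℂ), M.mulVec x = x →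
      ∀ k : ℕ, (M ^ k).mulVec x = x := by
    intro M x hx k
    induction k with
    | zero => simp
    | succ n ih => rw [pow_succ, ← Matrix.mulVec_mulVec, hx, ih]
  by_cases hvB : v + B.mulVec v = 0
  case neg =>
    -- the invariant vector is v + B v
    have hA'v : A'.mulVec v = v := by
      have h1 : A'.mulVec (A.mulVec v) = v := by
        rw [Matrix.mulVec_mulVec, hA'A, Matrix.one_mulVec]
      rwa [hAv] at h1
    have hAw : A.mulVec (v + B.mulVec v) = v + B.mulVec v := by
      rw [Matrix.mulVec_add, hAv, Matrix.mulVec_mulVec, hAB, ← Matrix.mulVec_mulVec, hA'v]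
    have hBw : B.mulVec (v + B.mulVec v) = v + B.mulVec v := by
      rw [Matrix.mulVec_add, Matrix.mulVec_mulVec, hBB, ← Matrix.mulVec_mulVec,
        ← Matrix.mulVec_mulVec, hAv, hAv, hAv, add_comm]
    refine ⟨v + B.mulVec v, hvB, ?_⟩
    have hfa : ∀ i : ZMod (2 * 3), (ρ (QuaternionGroup.a i) : Matrix (Fin 3) (Fin 3) ℂ).mulVec
        (v + B.mulVec v) = v + B.mulVec v := by
      intro i
      have hi : QuaternionGroup.a i = QuaternionGroup.a 1 ^ (i.val) := by
        rw [QuaternionGroup.a_one_pow]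
        congr 1
        simp [ZMod.natCast_val, ZMod.cast_id]
      rw [hi, map_pow, Matrix.SpecialLinearGroup.coe_pow]
      exact powfix A _ hAw i.val
    intro g
    cases g with
    | a i => exact hfa i
    | xa i =>
      have hxi : QuaternionGroup.xa i = QuaternionGroup.xa 0 * QuaternionGroup.a i := by
        rw [QuaternionGroup.xa_mul_a, zero_add]
      rw [hxi, _root_.map_mul, Matrix.SpecialLinearGroup.coe_mul, ← Matrix.mulVec_mulVec, hfa i]
      exact hBw
  case pos =>
    exfalso
    have hBv : B.mulVec v = -v := by
      have := eq_neg_of_add_eq_zero_right hvB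
      exact this
    -- charpoly analysis
    have hmon := Matrix.charpoly_monic A
    have hdeg : A.charpoly.natDegree = 3 := by
      rw [Matrix.charpoly_natDegree_eq_dim, Fintype.card_fin]
    have hq1 : A.charpoly.eval 1 = 0 := by
      rw [stmt7_eval_charpoly]
      have e : Matrix.scalar (Fin 3) (1 : ℂ) - A = -(A - 1) := by
        rw [_root_.map_one]
        exact (neg_sub A 1).symm
      rw [e, det_neg, hdet1]
      ring
    obtain ⟨h, hh⟩ := dvd_iff_isRoot.2 hq1
    have hhmon : h.Monic := (monic_X_sub_C (1 : ℂ)).of_mul_monic_left (hh ▸ hmon)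
    have hhdeg : h.natDegree = 2 := by
      have := hdeg
      rw [hh, (monic_X_sub_C (1 : ℂ)).natDegree_mul hhmon, natDegree_X_sub_C] at this
      omega
    obtain ⟨ζ, hζroot⟩ := Complex.exists_root (f := h) (by
      rw [Polynomial.degree_eq_natDegree hhmon.ne_zero, hhdeg]
      decide)
    obtain ⟨l, hl⟩ := dvd_iff_isRoot.2 hζroot
    have hlmon : l.Monic := (monic_X_sub_C ζ).of_mul_monic_left (hl ▸ hhmon)
    have hldeg : l.natDegree = 1 := by
      have := hhdeg
      rw [hl, (monic_X_sub_C ζ).natDegree_mul hlmon, natDegree_X_sub_C] at this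
      omega
    have hlC : l = X + C (l.coeff 0) := hlmon.eq_X_add_C hldeg
    set c : ℂ := l.coeff 0 with hcdef
    have hqfact : A.charpoly = (X - C 1) * ((X - C ζ) * (X + C c)) := by
      rw [hh, hl, ← hlC]
    -- ζ * c = -1
    have hc : ζ * c = -1 := by
      have h0 : A.charpoly.eval 0 = -1 := by
        rw [stmt7_eval_charpoly, map_zero, zero_sub, det_neg, hdA]
        norm_num
      rw [hqfact] at h0
      simp only [eval_mul, eval_sub, eval_add, eval_X, eval_C, eval_one] at h0
      linear_combination h0
    have hζ0 : ζ ≠ 0 := by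
      intro h0
      rw [h0, zero_mul] at hc
      norm_num at hc
    -- eigenvector w for ζ
    have hqζ : A.charpoly.eval ζ = 0 := by
      rw [hqfact]
      simp
    have hdetζ : (A - Matrix.scalar (Fin 3) ζ).det = 0 := by
      rw [stmt7_eval_charpoly] at hqζ
      have e : A - Matrix.scalar (Fin 3) ζ = -(Matrix.scalar (Fin 3) ζ - A) := (neg_sub _ _).symm
      rw [e, det_neg, hqζ]
      ring
    obtain ⟨w, hw0, hwA⟩ := Matrix.exists_mulVec_eq_zero_iff.2 hdetζ
    have hAw : A.mulVec w = ζ • w := by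
      rw [Matrix.sub_mulVec, sub_eq_zero] at hwA
      rw [hwA]
      funext i
      simp [Matrix.scalar_apply, Matrix.mulVec_diagonal]
    have heig : ∀ k : ℕ, (A ^ k).mulVec w = ζ ^ k • w := by
      intro k
      induction k with
      | zero => simp
      | succ n ih =>
        rw [pow_succ, ← Matrix.mulVec_mulVec, hAw, Matrix.mulVec_smul, ih, smul_smul, pow_succ,
          mul_comm]
    have hζ6 : ζ ^ 6 = 1 := by
      have h6 := heig 6
      rw [hA6, Matrix.one_mulVec] at h6
      obtain ⟨i, hi⟩ := Function.ne_iff.1 hw0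
      have hwi := congrFun h6 i
      simp only [Pi.smul_apply, smul_eq_mul, Pi.zero_apply] at hwi hi
      have : (ζ ^ 6 - 1) * w i = 0 := by linear_combination -hwi
      rcases mul_eq_zero.1 this with h' | h'
      · linear_combination h'
      · exact absurd h' hi
    have hCH := Matrix.aeval_self_charpoly A
    have hsplit : (ζ - 1) * ((ζ + 1) * ((ζ ^ 2 + ζ + 1) * (ζ ^ 2 - ζ + 1))) = 0 := by
      linear_combination hζ6
    have haevalpow6 : (Polynomial.aeval A) ((X : ℂ[X]) ^ 6 - 1) = 0 := by
      rw [map_sub, map_pow, aeval_X, _root_.map_one, hA6, sub_self]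
    rcases mul_eq_zero.1 hsplit with hz | hrest
    · -- ζ = 1, charpoly = (X-1)^3, A = 1, contradiction
      have hz1 : ζ = 1 := by linear_combination hz
      have hcc : c = -1 := by
        rw [hz1, one_mul] at hc
        exact hc
      rw [hz1, hcc] at hqfact
      have key : (12 : ℂ[X]) * (X - C 1) =
          (5 + 8 * X + 9 * X ^ 2 + 8 * X ^ 3 + 5 * X ^ 4) * ((X - C 1) * ((X - C 1) * (X + C (-1))))
          + (7 - 5 * X) * (X ^ 6 - 1) := by
        simp only [_root_.map_one, map_neg]
        ring
      rw [← hqfact] at key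
      have e := congrArg (Polynomial.aeval A) key
      simp only [map_add, _root_.map_mul, map_sub, map_pow, aeval_X, aeval_C, map_ofNat,
        _root_.map_one, map_neg, Matrix.aeval_self_charpoly, hA6, mul_zero, zero_add, sub_self,
        add_zero] at e
      have e5 : (12 : ℂ) • (A - 1) = 0 := by
        rw [Algebra.smul_def, map_ofNat]
        exact e
      rcases smul_eq_zero.mp e5 with h' | h'
      · norm_num at h'
      · exact hg6 (hinj' _ (by rw [← hAdef, ← sub_eq_zero]; exact h'))
    rcases mul_eq_zero.1 hrest with hz | hrest
    · -- ζ = -1, A^2 = 1, contradiction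
      have hz1 : ζ = -1 := by linear_combination hz
      have hcc : c = 1 := by
        rw [hz1] at hc
        linear_combination -hc
      rw [hz1, hcc] at hqfact
      have key : (3 : ℂ[X]) * (X ^ 2 - 1) =
          (2 - 2 * X + X ^ 2 - X ^ 3) * ((X - C 1) * ((X - C (-1)) * (X + C 1)))
          + (X ^ 6 - 1) := by
        simp only [_root_.map_one, map_neg]
        ring
      rw [← hqfact] at key
      have e := congrArg (Polynomial.aeval A) key
      simp only [map_add, _root_.map_mul, map_sub, map_pow, aeval_X, aeval_C, map_ofNat,
        _root_.map_one, map_neg, Matrix.aeval_self_charpoly, hA6, mul_zero, zero_add, sub_self,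
        add_zero] at e
      have e5 : (3 : ℂ) • (A ^ 2 - 1) = 0 := by
        rw [Algebra.smul_def, map_ofNat]
        exact e
      have e6 : A ^ 2 = 1 := by
        rcases smul_eq_zero.mp e5 with h' | h'
        · norm_num at h'
        · rw [← sub_eq_zero]; exact h'
      have e7 : (ρ (QuaternionGroup.a 1 * QuaternionGroup.a 1) : Matrix (Fin 3) (Fin 3) ℂ) = 1 := by
        rw [_root_.map_mul, Matrix.SpecialLinearGroup.coe_mul, ← hAdef, ← pow_two]
        exact e6
      exact hg7 (hinj' _ e7)
    rcases mul_eq_zero.1 hrest with hz | hz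
    · -- ζ^2 + ζ + 1 = 0, A^3 = 1, contradiction
      have hcc : c = ζ + 1 := by
        have h1 : ζ * (ζ + 1) = -1 := by linear_combination hz
        exact mul_left_cancel₀ hζ0 (hc.trans h1.symm)
      rw [hcc] at hqfact
      have hCz : (C ζ : ℂ[X]) ^ 2 + C ζ + 1 = 0 := by
        have := congrArg (Polynomial.C : ℂ → ℂ[X]) hz
        simpa using this
      have key : ((X : ℂ[X]) - C 1) * ((X - C ζ) * (X + C (ζ + 1))) = X ^ 3 - 1 := by
        simp only [map_add, _root_.map_one]
        linear_combination (1 - (X : ℂ[X])) * hCz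
      rw [key] at hqfact
      have e : (Polynomial.aeval A) ((X : ℂ[X]) ^ 3 - 1) = 0 := by
        rw [← hqfact]
        exact hCH
      rw [map_sub, map_pow, aeval_X, _root_.map_one, sub_eq_zero] at e
      have e7 : (ρ (QuaternionGroup.a 1 * (QuaternionGroup.a 1 * QuaternionGroup.a 1)) :
          Matrix (Fin 3) (Fin 3) ℂ) = 1 := by
        rw [_root_.map_mul, _root_.map_mul, Matrix.SpecialLinearGroup.coe_mul,
          Matrix.SpecialLinearGroup.coe_mul, ← hAdef]
        rw [show A * (A * A) = A ^ 3 by rw [← pow_two, ← pow_succ']]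
        exact e
      exact hg8 (hinj' _ e7)
    · -- ζ^2 - ζ + 1 = 0 : primitive 6th root; determinant contradiction
      have hζ3 : ζ * (ζ * ζ) = -1 := by linear_combination (ζ + 1) * hz
      have hζinv : ζ * (1 - ζ) = 1 := by linear_combination -hz
      -- eigenvalue facts for A' and u = B w
      have hA'w : A'.mulVec w = (1 - ζ) • w := by
        have h1 : A'.mulVec (A.mulVec w) = w := by
          rw [Matrix.mulVec_mulVec, hA'A, Matrix.one_mulVec]
        rw [hAw, Matrix.mulVec_smul] at h1
        have h2 := congrArg (fun x => (1 - ζ) • x) h1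
        simp only [smul_smul] at h2
        rw [show (1 - ζ) * ζ = 1 by linear_combination -hz, one_smul] at h2
        exact h2
      have hAu : A.mulVec (B.mulVec w) = (1 - ζ) • B.mulVec w := by
        rw [Matrix.mulVec_mulVec, hAB, ← Matrix.mulVec_mulVec, hA'w, Matrix.mulVec_smul]
      have hBu : B.mulVec (B.mulVec w) = -w := by
        have t1 : (A * A).mulVec w = (ζ * ζ) • w := by
          rw [← Matrix.mulVec_mulVec, hAw, Matrix.mulVec_smul, hAw, smul_smul]
        have t2 : (A * (A * A)).mulVec w = ((ζ * ζ) * ζ) • w := by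
          rw [← Matrix.mulVec_mulVec, t1, Matrix.mulVec_smul, hAw, smul_smul]
        rw [Matrix.mulVec_mulVec, hBB, t2, show (ζ * ζ) * ζ = -1 by linear_combination (ζ + 1) * hz,
          neg_one_smul]
      have hu0 : B.mulVec w ≠ 0 := by
        intro h0
        apply hw0
        have h1 : B'.mulVec (B.mulVec w) = w := by
          rw [Matrix.mulVec_mulVec, hB'B, Matrix.one_mulVec]
        rw [h0, Matrix.mulVec_zero] at h1
        exact h1.symm
      -- linear independence of v, w, B w
      have h1ζ : (1 : ℂ) ≠ ζ := by
        intro h'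
        rw [← h'] at hz
        norm_num at hz
      have h1ζ' : (1 : ℂ) ≠ 1 - ζ := by
        intro h'
        have : ζ = 0 := by linear_combination h'
        exact hζ0 this
      have hζζ' : ζ ≠ 1 - ζ := by
        intro h'
        have hh2 : 2 * ζ - 1 = 0 := by linear_combination h'
        have : (3 : ℂ) = 0 := by linear_combination 4 * hz - (2 * ζ - 1) * hh2
        norm_num at this
      have hμinj : Function.Injective ![(1 : ℂ), ζ, 1 - ζ] := by
        intro i j hij
        fin_cases i <;> fin_cases j <;>
          first
            | rfl
            | (exfalso
               simp at hij
               first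
                 | exact h1ζ hij
                 | exact h1ζ hij.symm
                 | exact h1ζ' hij
                 | exact h1ζ' hij.symm
                 | exact hζζ' hij
                 | exact hζζ' hij.symm
                 | exact hζ0 hij
                 | exact hζ0 hij.symm)
      set u : Fin 3 → ℂ := B.mulVec w with hudef
      have hev : ∀ i : Fin 3, Module.End.HasEigenvector (Matrix.mulVecLin A)
          (![(1 : ℂ), ζ, 1 - ζ] i) (![v, w, u] i) := by
        intro i
        fin_cases i
        · exact ⟨Module.End.mem_eigenspace_iff.2 (by simp [Matrix.mulVecLin_apply, hAv]), hv0⟩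
        · exact ⟨Module.End.mem_eigenspace_iff.2 (by simp [Matrix.mulVecLin_apply, hAw]), hw0⟩
        · exact ⟨Module.End.mem_eigenspace_iff.2 (by simp [Matrix.mulVecLin_apply, hAu]), hu0⟩
      have hind := Module.End.eigenvectors_linearIndependent' (Matrix.mulVecLin A)
        ![(1 : ℂ), ζ, 1 - ζ] hμinj ![v, w, u] hev
      have hBw : B.mulVec w = u := hudef.symm
      have hBv' : ∀ i, B i 0 * v 0 + B i 1 * v 1 + B i 2 * v 2 = -v i := by
        intro i
        simpa [Matrix.mulVec, dotProduct, Fin.sum_univ_three] using congrFun hBv i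
      have hBw' : ∀ i, B i 0 * w 0 + B i 1 * w 1 + B i 2 * w 2 = u i := by
        intro i
        simpa [Matrix.mulVec, dotProduct, Fin.sum_univ_three] using congrFun hBw i
      have hBu' : ∀ i, B i 0 * u 0 + B i 1 * u 1 + B i 2 * u 2 = -w i := by
        intro i
        simpa [Matrix.mulVec, dotProduct, Fin.sum_univ_three] using congrFun hBu i
      have hdetM : (!![v 0, w 0, u 0; v 1, w 1, u 1; v 2, w 2, u 2] :
          Matrix (Fin 3) (Fin 3) ℂ).det ≠ 0 := by
        intro hdM
        obtain ⟨cc, hcc0, hMc⟩ := Matrix.exists_mulVec_eq_zero_iff.2 hdM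
        have hsum : ∑ j : Fin 3, cc j • ![v, w, u] j = 0 := by
          rw [Fin.sum_univ_three]
          funext i
          have h0 := congrFun hMc i
          fin_cases i <;>
            · simp [Matrix.mulVec, dotProduct, Fin.sum_univ_three] at h0
              simp [Fin.sum_univ_three]
              linear_combination h0
        have hall := Fintype.linearIndependent_iff.1 hind cc hsum
        exact hcc0 (funext hall)
      have hBM : B * !![v 0, w 0, u 0; v 1, w 1, u 1; v 2, w 2, u 2] =
          !![-v 0, u 0, -w 0; -v 1, u 1, -w 1; -v 2, u 2, -w 2] := by
        ext i j
        fin_cases i <;> fin_cases j <;>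
          simp [Matrix.mul_apply, Fin.sum_univ_three] <;>
          first
            | linear_combination hBv' 0
            | linear_combination hBv' 1
            | linear_combination hBv' 2
            | linear_combination hBw' 0
            | linear_combination hBw' 1
            | linear_combination hBw' 2
            | linear_combination hBu' 0
            | linear_combination hBu' 1
            | linear_combination hBu' 2
      have hdetN : (!![-v 0, u 0, -w 0; -v 1, u 1, -w 1; -v 2, u 2, -w 2] :
          Matrix (Fin 3) (Fin 3) ℂ).det = -(!![v 0, w 0, u 0; v 1, w 1, u 1; v 2, w 2, u 2] :
          Matrix (Fin 3) (Fin 3) ℂ).det := by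
        simp [Matrix.det_fin_three]
        ring
      have hfinal := congrArg Matrix.det hBM
      rw [det_mul, hdB, one_mul, hdetN] at hfinal
      exact hdetM (by linear_combination hfinal / 2)
end

section
/- Let G be a finite group such that every commutative subgroup of G is either cyclic of order 1, 2, 3, 4, or 6, or isomorphic to (ℤ/2ℤ) × (ℤ/2ℤ). Then the order of G divides 24; that is, |G| ∈ {1, 2, 3, 4, 6, 8, 12, 24}. -/
open Subgroup

private lemma quot_small_comm {C : Type*} [Group C] [Finite C]
    (hq : Nat.card (C ⧸ Subgroup.center C) ≤ 2) : ∀ a b : C, a * b = b * a := by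
  have h0 : 0 < Nat.card (C ⧸ Subgroup.center C) := Nat.card_pos
  have hcyc : IsCyclic (C ⧸ Subgroup.center C) := by
    have : Nat.card (C ⧸ Subgroup.center C) = 1 ∨ Nat.card (C ⧸ Subgroup.center C) = 2 := by omega
    rcases this with h1 | h2
    · have : Subsingleton (C ⧸ Subgroup.center C) := (Nat.card_eq_one_iff_unique.mp h1).1
      infer_instance
    · haveI : Fact (Nat.Prime 2) := ⟨by norm_num⟩
      exact isCyclic_of_prime_card h2
  exact commutative_of_cyclic_center_quotient (QuotientGroup.mk' (Subgroup.center C))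
    (by rw [QuotientGroup.ker_mk'])

/-- If `W ≤ H` and `y ∈ H \ W`, then `2 * |W| ≤ |H|`. -/
private lemma card_ge_two_mul {K : Type*} [Group K] [Finite K] (W H : Subgroup K)
    (hWH : W ≤ H) (y : K) (hyH : y ∈ H) (hyW : y ∉ W) :
    2 * Nat.card W ≤ Nat.card H := by
  have h1 : Nat.card H = Nat.card (↥H ⧸ W.subgroupOf H) * Nat.card (W.subgroupOf H) :=
    Subgroup.card_eq_card_quotient_mul_card_subgroup _
  have h2 : Nat.card (W.subgroupOf H) = Nat.card W :=
    Nat.card_congr (Subgroup.subgroupOfEquivOfLe hWH).toEquiv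
  have h3 : Nontrivial (↥H ⧸ W.subgroupOf H) := by
    refine nontrivial_of_ne (QuotientGroup.mk ⟨y, hyH⟩) (QuotientGroup.mk 1) ?_
    rw [Ne, QuotientGroup.eq]
    simp only [Subgroup.mem_subgroupOf]
    simpa using hyW
  have h4 : 2 ≤ Nat.card (↥H ⧸ W.subgroupOf H) :=
    Finite.one_lt_card_iff_nontrivial.mpr h3
  calc 2 * Nat.card W = 2 * Nat.card (W.subgroupOf H) := by rw [h2]
    _ ≤ Nat.card (↥H ⧸ W.subgroupOf H) * Nat.card (W.subgroupOf H) :=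
        Nat.mul_le_mul_right _ h4
    _ = Nat.card H := h1.symm

/-- Shared endgame: if `H` contains a subgroup `W` central in `K`, and an element `y ∉ W`
centralizing `H`, and `|H| ≤ 4|W|`, then `H` is commutative. -/
private lemma tail {K : Type*} [Group K] [Finite K]
    (H W : Subgroup K) (hWH : W ≤ H)
    (hWc : ∀ w ∈ W, w ∈ Subgroup.center K)
    (y : K) (hyH : y ∈ H) (hyc : ∀ c ∈ H, c * y = y * c) (hyW : y ∉ W)
    (hq : Nat.card H ≤ 4 * Nat.card W) :
    ∀ a b : H, a * b = b * a := by
  have hyS : (⟨y, hyH⟩ : H) ∈ Subgroup.center H := by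
    rw [Subgroup.mem_center_iff]
    intro b
    exact Subtype.ext (hyc b b.2)
  have hWsub : W.subgroupOf H ≤ Subgroup.center H := by
    intro a ha
    rw [Subgroup.mem_center_iff]
    intro b
    exact Subtype.ext (Subgroup.mem_center_iff.mp (hWc a (Subgroup.mem_subgroupOf.mp ha)) b)
  have h2cW : 2 * Nat.card (W.subgroupOf H) ≤ Nat.card (Subgroup.center H) := by
    refine card_ge_two_mul _ _ hWsub ⟨y, hyH⟩ hyS ?_
    rw [Subgroup.mem_subgroupOf]
    exact hyW
  have hWeq : Nat.card (W.subgroupOf H) = Nat.card W :=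
    Nat.card_congr (Subgroup.subgroupOfEquivOfLe hWH).toEquiv
  have hcard : Nat.card H = Nat.card (↥H ⧸ Subgroup.center H) * Nat.card (Subgroup.center H) :=
    Subgroup.card_eq_card_quotient_mul_card_subgroup _
  have hSpos : 0 < Nat.card (Subgroup.center H) := Nat.card_pos
  have hq2 : Nat.card (↥H ⧸ Subgroup.center H) ≤ 2 := by
    by_contra hgt
    push_neg at hgt
    nlinarith [hcard, h2cW, hq, hWeq]
  exact quot_small_comm hq2

private lemma key16 {K : Type*} [Group K] [Finite K] (hc : Nat.card K = 16)
    (hK : ∀ L : Subgroup K, (∀ a b : L, a * b = b * a) → Nat.card L ≤ 6) : False := by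
  have hnt : Nontrivial K := Finite.one_lt_card_iff_nontrivial.mp (by omega)
  have hp2 : IsPGroup 2 K := IsPGroup.of_card (n := 4) (by norm_num [hc])
  have hZcomm : ∀ a b : Subgroup.center K, a * b = b * a := fun a b =>
    Subtype.ext (Subgroup.mem_center_iff.mp b.2 a)
  have hZle6 := hK _ hZcomm
  have hZdvd : Nat.card (Subgroup.center K) ∣ 16 := hc ▸ Subgroup.card_subgroup_dvd_card _
  have hZnt : Nontrivial (Subgroup.center K) := hp2.center_nontrivial
  have hZ1 : 1 < Nat.card (Subgroup.center K) := Finite.one_lt_card_iff_nontrivial.mpr hZnt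
  have hZ24 : Nat.card (Subgroup.center K) = 2 ∨ Nat.card (Subgroup.center K) = 4 := by
    obtain ⟨k, hk⟩ := hZdvd
    set n := Nat.card (Subgroup.center K)
    interval_cases n <;> omega
  rcases hZ24 with hZ2 | hZ4
  · -- |Z| = 2
    have hq8 : Nat.card (K ⧸ Subgroup.center K) * 2 = 16 := by
      have h0 := Subgroup.card_eq_card_quotient_mul_card_subgroup (Subgroup.center K)
      rw [hZ2] at h0
      omega
    have hqnt : Nontrivial (K ⧸ Subgroup.center K) :=
      Finite.one_lt_card_iff_nontrivial.mp (by omega)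
    have hpq : IsPGroup 2 (K ⧸ Subgroup.center K) := hp2.to_quotient _
    have hqcnt : Nontrivial (Subgroup.center (K ⧸ Subgroup.center K)) := hpq.center_nontrivial
    obtain ⟨⟨ybar, hybar⟩, hyne⟩ := exists_ne (1 : Subgroup.center (K ⧸ Subgroup.center K))
    obtain ⟨y, rfl⟩ := QuotientGroup.mk_surjective ybar
    have hyZ : y ∉ Subgroup.center K := by
      intro hy
      exact hyne (Subtype.ext ((QuotientGroup.eq_one_iff y).mpr hy))
    have hyc : ∀ c : K, c * y * c⁻¹ * y⁻¹ ∈ Subgroup.center K := by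
      intro c
      have h2 : ((c : K ⧸ Subgroup.center K)) * (y : K ⧸ Subgroup.center K)
          = (y : K ⧸ Subgroup.center K) * c := Subgroup.mem_center_iff.mp hybar _
      rw [← QuotientGroup.eq_one_iff]
      simp only [QuotientGroup.mk_mul, QuotientGroup.mk_inv]
      rw [h2]
      group
    let f : K →* K :=
      { toFun := fun c => c * y * c⁻¹ * y⁻¹
        map_one' := by group
        map_mul' := by
          intro a b
          have hbc := Subgroup.mem_center_iff.mp (hyc b)
          show a * b * y * (a * b)⁻¹ * y⁻¹ = (a * y * a⁻¹ * y⁻¹) * (b * y * b⁻¹ * y⁻¹)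
          calc a * b * y * (a * b)⁻¹ * y⁻¹
              = a * ((b * y * b⁻¹ * y⁻¹) * y) * a⁻¹ * y⁻¹ := by group
            _ = (a * (b * y * b⁻¹ * y⁻¹)) * (y * a⁻¹ * y⁻¹) := by group
            _ = ((b * y * b⁻¹ * y⁻¹) * a) * (y * a⁻¹ * y⁻¹) := by rw [hbc a]
            _ = (b * y * b⁻¹ * y⁻¹) * (a * y * a⁻¹ * y⁻¹) := by group
            _ = (a * y * a⁻¹ * y⁻¹) * (b * y * b⁻¹ * y⁻¹) := (hbc _).symm }
    have hrange : f.range ≤ Subgroup.center K := by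
      rintro - ⟨c, rfl⟩
      exact hyc c
    have hcr : Nat.card f.range ∣ 2 := hZ2 ▸ Subgroup.card_dvd_of_le hrange
    have hkereq : Nat.card (K ⧸ f.ker) = Nat.card f.range :=
      Nat.card_congr (QuotientGroup.quotientKerEquivRange f).toEquiv
    have hker16 : Nat.card (K ⧸ f.ker) * Nat.card f.ker = 16 := by
      rw [← hc]
      exact (Subgroup.card_eq_card_quotient_mul_card_subgroup f.ker).symm
    have hq2 : Nat.card (K ⧸ f.ker) ≤ 2 := hkereq ▸ Nat.le_of_dvd (by norm_num) hcr
    have hqpos : 0 < Nat.card (K ⧸ f.ker) := Nat.card_pos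
    have h8 : 8 ≤ Nat.card f.ker := by nlinarith
    have hyker : y ∈ f.ker := by
      rw [MonoidHom.mem_ker]
      show y * y * y⁻¹ * y⁻¹ = 1
      group
    have hZker : Subgroup.center K ≤ f.ker := by
      intro z hz
      rw [MonoidHom.mem_ker]
      show z * y * z⁻¹ * y⁻¹ = 1
      rw [(Subgroup.mem_center_iff.mp hz y).symm]
      group
    have hkc : ∀ c ∈ f.ker, c * y = y * c := by
      intro c hcmem
      have h1 : c * y * c⁻¹ * y⁻¹ = 1 := hcmem
      have h2 : (c * y * c⁻¹ * y⁻¹) * (y * c) = c * y := by group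
      rw [h1, one_mul] at h2
      exact h2.symm
    have hkerne : Nat.card f.ker ≠ 16 := by
      intro h16
      have htop : f.ker = ⊤ := Subgroup.eq_top_of_card_eq _ (by rw [h16, hc])
      apply hyZ
      rw [Subgroup.mem_center_iff]
      intro g
      exact hkc g (htop ▸ Subgroup.mem_top g)
    have hkd : Nat.card f.ker ∣ 16 := hc ▸ Subgroup.card_subgroup_dvd_card _
    have hk8 : Nat.card f.ker = 8 := by
      obtain ⟨m, hm⟩ := hkd
      have hm2 : m ≤ 2 := by nlinarith
      interval_cases m <;> omega
    have hcomm := tail f.ker (Subgroup.center K) hZker (fun w hw => hw) y hyker hkc hyZ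
      (by rw [hk8, hZ2])
    have := hK f.ker hcomm
    omega
  · -- |Z| = 4
    have hne : Subgroup.center K ≠ ⊤ := by
      intro htop
      rw [htop, Subgroup.card_top, hc] at hZ4
      omega
    obtain ⟨x, hx⟩ : ∃ x, x ∉ Subgroup.center K := by
      by_contra hall
      push_neg at hall
      exact hne ((Subgroup.eq_top_iff' _).mpr hall)
    set H := Subgroup.centralizer ({x} : Set K) with hHdef
    have hZH : Subgroup.center K ≤ H := Subgroup.center_le_centralizer _
    have hxH : x ∈ H := by
      rw [Subgroup.mem_centralizer_iff]
      intro g hg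
      rw [Set.mem_singleton_iff] at hg
      subst hg
      rfl
    have hHc : ∀ c ∈ H, c * x = x * c := by
      intro c hcm
      exact (Subgroup.mem_centralizer_iff.mp hcm x rfl).symm
    have hHdvd : Nat.card H ∣ 16 := hc ▸ Subgroup.card_subgroup_dvd_card _
    have hcomm := tail H (Subgroup.center K) hZH (fun w hw => hw) x hxH hHc hx
      (by rw [hZ4]; exact Nat.le_of_dvd (by norm_num) hHdvd)
    have h6 := hK H hcomm
    have h8 : 2 * Nat.card (Subgroup.center K) ≤ Nat.card H :=
      card_ge_two_mul _ _ hZH x hxH hx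
    omega

/-- Group-theoretic core of Lemma (2.8): if every commutative subgroup of the
finite group `G` is cyclic of order `1, 2, 3, 4` or `6`, or is a Klein
four-group, then `|G| ∈ {1, 2, 3, 4, 6, 8, 12, 24}` (the divisors of 24). -/
theorem stmt_8 {G : Type*} [Group G] [Finite G]
    (h : ∀ H : Subgroup G, (∀ x y : H, x * y = y * x) →
      (IsCyclic H ∧ Nat.card H ∈ ({1, 2, 3, 4, 6} : Set ℕ)) ∨
        Nonempty (H ≃* Multiplicative (ZMod 2 × ZMod 2))) :
    Nat.card G ∈ ({1, 2, 3, 4, 6, 8, 12, 24} : Set ℕ) := by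
  have hcard : ∀ H : Subgroup G, (∀ x y : H, x * y = y * x) →
      Nat.card H ∈ ({1, 2, 3, 4, 6} : Set ℕ) := by
    intro H hH
    rcases h H hH with ⟨-, hmem⟩ | he
    · exact hmem
    · obtain ⟨e⟩ := he
      have h4 : Nat.card H = 4 := by
        rw [Nat.card_congr e.toEquiv]
        simp only [Nat.card_eq_fintype_card]
        rw [show Fintype.card (Multiplicative (ZMod 2 × ZMod 2))
            = Fintype.card (ZMod 2 × ZMod 2) from rfl]
        simp [Fintype.card_prod, ZMod.card]
      rw [h4]
      simp
  have hle6 : ∀ H : Subgroup G, (∀ x y : H, x * y = y * x) → Nat.card H ≤ 6 := by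
    intro H hH
    have := hcard H hH
    simp only [Set.mem_insert_iff, Set.mem_singleton_iff] at this
    omega
  -- no subgroup of order 16
  have h16 : ¬ (2 ^ 4 ∣ Nat.card G) := by
    intro hdvd
    haveI : Fact (Nat.Prime 2) := ⟨by norm_num⟩
    obtain ⟨H, hH⟩ := Sylow.exists_subgroup_card_pow_prime 2 hdvd
    refine key16 (K := ↥H) (by simpa using hH) ?_
    intro L hL
    have e := Subgroup.equivMapOfInjective L H.subtype H.subtype_injective
    have hcomm : ∀ a b : (L.map H.subtype), a * b = b * a := by
      intro a b
      obtain ⟨la, rfl⟩ := e.surjective a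
      obtain ⟨lb, rfl⟩ := e.surjective b
      rw [← map_mul, ← map_mul, hL]
    have := hle6 _ hcomm
    rwa [Nat.card_congr e.toEquiv]
  -- no subgroup of order 9
  have h9 : ¬ (3 ^ 2 ∣ Nat.card G) := by
    intro hdvd
    haveI : Fact (Nat.Prime 3) := ⟨by norm_num⟩
    obtain ⟨H, hH⟩ := Sylow.exists_subgroup_card_pow_prime 3 hdvd
    have hcomm : ∀ a b : H, a * b = b * a :=
      IsPGroup.commutative_of_card_eq_prime_sq hH
    have := hcard H hcomm
    rw [hH] at this
    simp only [Set.mem_insert_iff, Set.mem_singleton_iff] at this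
    omega
  -- every prime divisor is 2 or 3
  have hprime : ∀ p : ℕ, Nat.Prime p → p ∣ Nat.card G → p = 2 ∨ p = 3 := by
    intro p hp hdvd
    haveI : Fact (Nat.Prime p) := ⟨hp⟩
    obtain ⟨x, hx⟩ := exists_prime_orderOf_dvd_card' p hdvd
    have hcomm : ∀ a b : Subgroup.zpowers x, a * b = b * a := fun a b => Std.Commutative.comm a b
    have hmem := hcard (Subgroup.zpowers x) hcomm
    rw [Nat.card_zpowers, hx] at hmem
    simp only [Set.mem_insert_iff, Set.mem_singleton_iff] at hmem
    rcases hmem with rfl | rfl | rfl | rfl | rfl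
    · exact absurd hp (by norm_num)
    · exact Or.inl rfl
    · exact Or.inr rfl
    · exact absurd hp (by norm_num)
    · exact absurd hp (by norm_num)
  -- conclude divisibility
  have hdvd24 : Nat.card G ∣ 24 := by
    rw [Nat.dvd_iff_prime_pow_dvd_dvd]
    intro p k hp hpk
    rcases Nat.eq_zero_or_pos k with rfl | hk
    · simp only [pow_zero]; exact one_dvd _
    have hpp : Nat.Prime p := hp
    have hpdvd : p ∣ Nat.card G := dvd_trans (dvd_pow_self p hk.ne') hpk
    rcases hprime p hpp hpdvd with rfl | rfl
    · have hk3 : k ≤ 3 := by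
        by_contra hgt
        push_neg at hgt
        exact h16 (dvd_trans (pow_dvd_pow 2 hgt) hpk)
      calc (2 : ℕ) ^ k ∣ 2 ^ 3 := pow_dvd_pow 2 hk3
        _ ∣ 24 := by norm_num
    · have hk1 : k ≤ 1 := by
        by_contra hgt
        push_neg at hgt
        exact h9 (dvd_trans (pow_dvd_pow 3 hgt) hpk)
      calc (3 : ℕ) ^ k ∣ 3 ^ 1 := pow_dvd_pow 3 hk1
        _ ∣ 24 := by norm_num
  have hpos : 0 < Nat.card G := Nat.card_pos
  have hle : Nat.card G ≤ 24 := Nat.le_of_dvd (by norm_num) hdvd24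
  set n := Nat.card G with hn
  simp only [Set.mem_insert_iff, Set.mem_singleton_iff]
  interval_cases n <;> revert hdvd24 <;> norm_num
end

section
/- Let Λ be an additive subgroup of ℂ³ stable under both the cyclic coordinate permutation σ(z₁, z₂, z₃) = (z₂, z₃, z₁) and the map τ(z₁, z₂, z₃) = (z₁, −z₂, −z₃). Let α = (α₁, α₂, α₃) ∈ ℂ³ and let a : ℂ³/Λ → ℂ³/Λ be the well-defined map a([z]) = [σ(z) + α]. If a ∘ a ∘ a is the identity of ℂ³/Λ, then the point P = [(0, α₂ + α₃, α₁ + α₂ + 2α₃)] satisfies a(a(P)) = P; in particular a ∘ a has a fixed point on ℂ³/Λ. -/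
/-! Write `S = α₁ + α₂ + α₃`. Since `σ³ = id`, `a³([z]) = [z + (S, S, S)]`, so `a³ = id` forces
`(S, S, S) ∈ Λ`; adding its image under `τ` gives `(2S, 0, 0) ∈ Λ`. On the other hand
`a²(P) = P + [(2S, 0, 0)]`, so `P` is fixed by `a²`. -/

open QuotientAddGroup

section

variable {R : Type*} [CommRing R] {Λ : AddSubgroup (R × R × R)} {α : R × R × R}
  {a : (R × R × R) ⧸ Λ → (R × R × R) ⧸ Λ}

theorem two_mul_fst_mem (hτ : ∀ z ∈ Λ, ((z.1, -z.2.1, -z.2.2) : R × R × R) ∈ Λ)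
    {z : R × R × R} (hz : z ∈ Λ) : ((2 * z.1, 0, 0) : R × R × R) ∈ Λ := by
  convert Λ.add_mem hz (hτ z hz) using 1
  ext <;> simp only [Prod.fst_add, Prod.snd_add, two_mul, add_neg_cancel]

variable (ha : ∀ z : R × R × R, a (mk z) = mk ((z.2.1, z.2.2, z.1) + α))
include ha

theorem diag_sum_mem_of_comp_comp_eq_id (ha3 : a ∘ a ∘ a = id) :
    ((α.1 + α.2.1 + α.2.2, α.1 + α.2.1 + α.2.2, α.1 + α.2.1 + α.2.2) : R × R × R) ∈ Λ := by
  have h := congrFun ha3 (mk 0)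
  simp only [Function.comp_apply, id, ha, QuotientAddGroup.eq] at h
  convert Λ.neg_mem h using 1
  ext <;> simp only [Prod.fst_add, Prod.snd_add, Prod.fst_neg, Prod.snd_neg, Prod.fst_zero,
    Prod.snd_zero] <;> ring

theorem apply_apply_mk_eq_self
    (h2s : ((2 * (α.1 + α.2.1 + α.2.2), 0, 0) : R × R × R) ∈ Λ) :
    a (a (mk ((0, α.2.1 + α.2.2, α.1 + α.2.1 + 2 * α.2.2) : R × R × R))) =
      mk ((0, α.2.1 + α.2.2, α.1 + α.2.1 + 2 * α.2.2) : R × R × R) := by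
  rw [ha, ha, QuotientAddGroup.eq]
  convert Λ.neg_mem h2s using 1
  ext <;> simp only [Prod.fst_add, Prod.snd_add, Prod.fst_neg, Prod.snd_neg, neg_zero] <;> ring

end

theorem stmt_9_general (Λ : AddSubgroup (ℂ × ℂ × ℂ))
    (hτ : ∀ z ∈ Λ, ((z.1, -z.2.1, -z.2.2) : ℂ × ℂ × ℂ) ∈ Λ)
    (α : ℂ × ℂ × ℂ)
    (a : (ℂ × ℂ × ℂ) ⧸ Λ → (ℂ × ℂ × ℂ) ⧸ Λ)
    (ha : ∀ z : ℂ × ℂ × ℂ,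
      a (QuotientAddGroup.mk z) = QuotientAddGroup.mk ((z.2.1, z.2.2, z.1) + α))
    (ha3 : a ∘ a ∘ a = id) :
    a (a (QuotientAddGroup.mk
        ((0, α.2.1 + α.2.2, α.1 + α.2.1 + 2 * α.2.2) : ℂ × ℂ × ℂ))) =
      QuotientAddGroup.mk ((0, α.2.1 + α.2.2, α.1 + α.2.1 + 2 * α.2.2) : ℂ × ℂ × ℂ) ∧
    ∃ Q : (ℂ × ℂ × ℂ) ⧸ Λ, a (a Q) = Q := by
  have hP := apply_apply_mk_eq_self ha
    (two_mul_fst_mem hτ (diag_sum_mem_of_comp_comp_eq_id ha ha3))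
  exact ⟨hP, _, hP⟩

/-- Computational core of Lemma (2.14): for a lattice `Λ ⊆ ℂ³` stable under
the cyclic permutation `σ(z₁,z₂,z₃) = (z₂,z₃,z₁)` and under
`τ(z₁,z₂,z₃) = (z₁,−z₂,−z₃)`, if `a([z]) = [σ(z) + α]` satisfies `a³ = id` on
`ℂ³/Λ`, then `P = [(0, α₂+α₃, α₁+α₂+2α₃)]` is a fixed point of `a²`. -/
theorem stmt_9 (Λ : AddSubgroup (ℂ × ℂ × ℂ))
    (hσ : ∀ z ∈ Λ, ((z.2.1, z.2.2, z.1) : ℂ × ℂ × ℂ) ∈ Λ)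
    (hτ : ∀ z ∈ Λ, ((z.1, -z.2.1, -z.2.2) : ℂ × ℂ × ℂ) ∈ Λ)
    (α : ℂ × ℂ × ℂ)
    (a : (ℂ × ℂ × ℂ) ⧸ Λ → (ℂ × ℂ × ℂ) ⧸ Λ)
    (ha : ∀ z : ℂ × ℂ × ℂ,
      a (QuotientAddGroup.mk z) = QuotientAddGroup.mk ((z.2.1, z.2.2, z.1) + α))
    (ha3 : a ∘ a ∘ a = id) :
    a (a (QuotientAddGroup.mk
        ((0, α.2.1 + α.2.2, α.1 + α.2.1 + 2 * α.2.2) : ℂ × ℂ × ℂ))) =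
      QuotientAddGroup.mk ((0, α.2.1 + α.2.2, α.1 + α.2.1 + 2 * α.2.2) : ℂ × ℂ × ℂ) ∧
    ∃ Q : (ℂ × ℂ × ℂ) ⧸ Λ, a (a Q) = Q :=
  stmt_9_general Λ hτ α a ha ha3
end

section
/- Let E₁ and E₂ be additively written abelian groups, let τ₁ ∈ E₁ satisfy 4τ₁ = 0 and 2τ₁ ≠ 0, and let τ₂, τ₃ ∈ E₂ be two distinct nonzero elements with 2τ₂ = 2τ₃ = 0. On Ã = E₁ × E₂ × E₂ define ã(z₁, z₂, z₃) = (z₁ + τ₁, −z₃, z₂) and b̃(z₁, z₂, z₃) = (−z₁, z₂ + τ₂, −z₃ + τ₃), and let N be the subgroup of Ã generated by τ = (0, τ₂ + τ₃, τ₂ + τ₃). Then ã and b̃ descend to bijections a and b of A = Ã/N; these satisfy a⁴ = b² = id and b ∘ a ∘ b = a⁻¹; the subgroup G = ⟨a, b⟩ of the permutation group of A has order 8 (so G is isomorphic to the dihedral group D₈); and no element g ≠ id of G has a fixed point on A. -/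
namespace IgusaAux

theorem triple_eq {A B C : Type*} {a a' : A} {b b' : B} {c c' : C}
    (h1 : a = a') (h2 : b = b') (h3 : c = c') : ((a, b, c) : A × B × C) = (a', b', c') := by
  subst h1; subst h2; subst h3; rfl

theorem mem_zmul_two {G : Type*} [AddCommGroup G] {t : G} (ht : t + t = 0) (x : G) :
    x ∈ AddSubgroup.zmultiples t ↔ x = 0 ∨ x = t := by
  constructor
  · rintro ⟨n, rfl⟩
    show n • t = 0 ∨ n • t = t
    have h2 : (2 : ℤ) • t = 0 := by rw [two_zsmul, ht]
    obtain ⟨k, hk⟩ : ∃ k : ℤ, n = k * 2 + n % 2 := ⟨n / 2, by omega⟩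
    rw [hk, add_zsmul, mul_zsmul, h2, smul_zero, zero_add]
    rcases Int.emod_two_eq n with h | h <;> rw [h]
    · exact Or.inl (zero_zsmul t)
    · exact Or.inr (one_zsmul t)
  · rintro (rfl | rfl)
    · exact zero_mem _
    · exact AddSubgroup.mem_zmultiples _

def permQuot {G : Type*} [AddCommGroup G] (t : G) (ht : t + t = 0) (f g : G → G)
    (hf : ∀ x, f (x + t) = f x + t) (hg : ∀ x, g (x + t) = g x + t)
    (hgf : ∀ x, g (f x) = x) (hfg : ∀ x, f (g x) = x) :
    Equiv.Perm (G ⧸ AddSubgroup.zmultiples t) where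
  toFun := Quotient.map' f (by
    intro x y hxy
    have h1 : -x + y ∈ AddSubgroup.zmultiples t := QuotientAddGroup.leftRel_apply.mp hxy
    refine QuotientAddGroup.leftRel_apply.mpr ?_
    rw [mem_zmul_two ht] at h1 ⊢
    rcases h1 with h1 | h1
    · left
      have hyx : y = x := by linear_combination (norm := abel) h1
      rw [hyx]; abel
    · right
      have hyx : y = x + t := by linear_combination (norm := abel) h1
      rw [hyx, hf]; abel)
  invFun := Quotient.map' g (by
    intro x y hxy
    have h1 : -x + y ∈ AddSubgroup.zmultiples t := QuotientAddGroup.leftRel_apply.mp hxy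
    refine QuotientAddGroup.leftRel_apply.mpr ?_
    rw [mem_zmul_two ht] at h1 ⊢
    rcases h1 with h1 | h1
    · left
      have hyx : y = x := by linear_combination (norm := abel) h1
      rw [hyx]; abel
    · right
      have hyx : y = x + t := by linear_combination (norm := abel) h1
      rw [hyx, hg]; abel)
  left_inv := by
    refine fun q => QuotientAddGroup.induction_on q fun z => ?_
    show QuotientAddGroup.mk (g (f z)) = QuotientAddGroup.mk z
    rw [hgf]
  right_inv := by
    refine fun q => QuotientAddGroup.induction_on q fun z => ?_
    show QuotientAddGroup.mk (f (g z)) = QuotientAddGroup.mk z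
    rw [hfg]

theorem permQuot_mk {G : Type*} [AddCommGroup G] (t : G) (ht : t + t = 0) (f g : G → G)
    (hf : ∀ x, f (x + t) = f x + t) (hg : ∀ x, g (x + t) = g x + t)
    (hgf : ∀ x, g (f x) = x) (hfg : ∀ x, f (g x) = x) (z : G) :
    permQuot t ht f g hf hg hgf hfg (QuotientAddGroup.mk z) = QuotientAddGroup.mk (f z) :=
  rfl

end IgusaAux

open IgusaAux in
/-- Verification of Example (2.18) (the refined Igusa pair): the maps
`ã(z₁,z₂,z₃) = (z₁+τ₁, −z₃, z₂)` and `b̃(z₁,z₂,z₃) = (−z₁, z₂+τ₂, −z₃+τ₃)`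
descend to permutations `a, b` of `A = (E₁ × E₂ × E₂)/⟨(0, τ₂+τ₃, τ₂+τ₃)⟩`
with `a⁴ = b² = 1`, `b a b = a⁻¹`, generating a subgroup of order 8
(isomorphic to `D₈`) acting freely on `A`. -/
theorem stmt_11 {E₁ E₂ : Type*} [AddCommGroup E₁] [AddCommGroup E₂]
    (τ₁ : E₁) (τ₂ τ₃ : E₂)
    (h₁ : 4 • τ₁ = 0) (h₁' : 2 • τ₁ ≠ 0)
    (h₂0 : τ₂ ≠ 0) (h₃0 : τ₃ ≠ 0) (h₂₃ : τ₂ ≠ τ₃)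
    (h₂ : 2 • τ₂ = 0) (h₃ : 2 • τ₃ = 0) :
    ∃ a b : Equiv.Perm ((E₁ × E₂ × E₂) ⧸
        AddSubgroup.zmultiples ((0, τ₂ + τ₃, τ₂ + τ₃) : E₁ × E₂ × E₂)),
      (∀ z : E₁ × E₂ × E₂,
        a (QuotientAddGroup.mk z) = QuotientAddGroup.mk (z.1 + τ₁, -z.2.2, z.2.1)) ∧
      (∀ z : E₁ × E₂ × E₂,
        b (QuotientAddGroup.mk z) = QuotientAddGroup.mk (-z.1, z.2.1 + τ₂, -z.2.2 + τ₃)) ∧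
      a ^ 4 = 1 ∧ b ^ 2 = 1 ∧ b * a * b = a⁻¹ ∧
      Nat.card (Subgroup.closure {a, b}) = 8 ∧
      Nonempty ((Subgroup.closure {a, b}) ≃* DihedralGroup 4) ∧
      ∀ g ∈ Subgroup.closure {a, b}, g ≠ 1 →
        ∀ x : (E₁ × E₂ × E₂) ⧸
            AddSubgroup.zmultiples ((0, τ₂ + τ₃, τ₂ + τ₃) : E₁ × E₂ × E₂),
          g x ≠ x := by
  have hτne : τ₂ + τ₃ ≠ 0 := by
    intro h
    exact h₂₃ (by linear_combination (norm := abel) h - h₃)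
  have hττ : ((0, τ₂ + τ₃, τ₂ + τ₃) : E₁ × E₂ × E₂) + (0, τ₂ + τ₃, τ₂ + τ₃) = 0 := by
    simp only [Prod.mk_add_mk, Prod.mk_eq_zero]
    exact ⟨by abel, by linear_combination (norm := abel) h₂ + h₃,
      by linear_combination (norm := abel) h₂ + h₃⟩
  -- construct a
  obtain ⟨a, ha⟩ : ∃ a : Equiv.Perm ((E₁ × E₂ × E₂) ⧸
      AddSubgroup.zmultiples ((0, τ₂ + τ₃, τ₂ + τ₃) : E₁ × E₂ × E₂)),
      ∀ z : E₁ × E₂ × E₂,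
        a (QuotientAddGroup.mk z) = QuotientAddGroup.mk (z.1 + τ₁, -z.2.2, z.2.1) := by
    refine ⟨permQuot _ hττ (fun z => (z.1 + τ₁, -z.2.2, z.2.1))
      (fun z => (z.1 - τ₁, z.2.2, -z.2.1)) ?_ ?_ ?_ ?_, fun z => rfl⟩
    · rintro ⟨x₁, x₂, x₃⟩
      show ((x₁ + 0 + τ₁, -(x₃ + (τ₂ + τ₃)), x₂ + (τ₂ + τ₃)) : E₁ × E₂ × E₂) =
        (x₁ + τ₁ + 0, -x₃ + (τ₂ + τ₃), x₂ + (τ₂ + τ₃))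
      exact triple_eq (by abel) (by linear_combination (norm := abel) - h₂ - h₃) rfl
    · rintro ⟨x₁, x₂, x₃⟩
      show ((x₁ + 0 - τ₁, x₃ + (τ₂ + τ₃), -(x₂ + (τ₂ + τ₃))) : E₁ × E₂ × E₂) =
        (x₁ - τ₁ + 0, x₃ + (τ₂ + τ₃), -x₂ + (τ₂ + τ₃))
      exact triple_eq (by abel) rfl (by linear_combination (norm := abel) - h₂ - h₃)
    · rintro ⟨x₁, x₂, x₃⟩
      show ((x₁ + τ₁ - τ₁, x₂, -(-x₃)) : E₁ × E₂ × E₂) = (x₁, x₂, x₃)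
      exact triple_eq (by abel) rfl (neg_neg x₃)
    · rintro ⟨x₁, x₂, x₃⟩
      show ((x₁ - τ₁ + τ₁, -(-x₂), x₃) : E₁ × E₂ × E₂) = (x₁, x₂, x₃)
      exact triple_eq (by abel) (neg_neg x₂) rfl
  -- construct b
  obtain ⟨b, hb⟩ : ∃ b : Equiv.Perm ((E₁ × E₂ × E₂) ⧸
      AddSubgroup.zmultiples ((0, τ₂ + τ₃, τ₂ + τ₃) : E₁ × E₂ × E₂)),
      ∀ z : E₁ × E₂ × E₂,
        b (QuotientAddGroup.mk z) = QuotientAddGroup.mk (-z.1, z.2.1 + τ₂, -z.2.2 + τ₃) := by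
    have hbb : ∀ x : E₁ × E₂ × E₂,
        (fun z : E₁ × E₂ × E₂ => (-z.1, z.2.1 + τ₂, -z.2.2 + τ₃))
          ((fun z : E₁ × E₂ × E₂ => (-z.1, z.2.1 + τ₂, -z.2.2 + τ₃)) x) = x := by
      rintro ⟨x₁, x₂, x₃⟩
      show ((-(-x₁), x₂ + τ₂ + τ₂, -(-x₃ + τ₃) + τ₃) : E₁ × E₂ × E₂) = (x₁, x₂, x₃)
      exact triple_eq (neg_neg x₁) (by linear_combination (norm := abel) h₂) (by abel)
    have hdesc : ∀ x : E₁ × E₂ × E₂,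
        (fun z : E₁ × E₂ × E₂ => (-z.1, z.2.1 + τ₂, -z.2.2 + τ₃))
          (x + (0, τ₂ + τ₃, τ₂ + τ₃)) =
        (fun z : E₁ × E₂ × E₂ => (-z.1, z.2.1 + τ₂, -z.2.2 + τ₃)) x
          + (0, τ₂ + τ₃, τ₂ + τ₃) := by
      rintro ⟨x₁, x₂, x₃⟩
      show ((-(x₁ + 0), x₂ + (τ₂ + τ₃) + τ₂, -(x₃ + (τ₂ + τ₃)) + τ₃) : E₁ × E₂ × E₂) =
        (-x₁ + 0, x₂ + τ₂ + (τ₂ + τ₃), -x₃ + τ₃ + (τ₂ + τ₃))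
      exact triple_eq (by abel) (by abel) (by linear_combination (norm := abel) - h₂ - h₃)
    exact ⟨permQuot _ hττ _ _ hdesc hdesc hbb hbb, fun z => rfl⟩
  -- relations
  have ha4 : a ^ 4 = 1 := by
    refine Equiv.ext fun x => ?_
    refine QuotientAddGroup.induction_on x fun z => ?_
    obtain ⟨z₁, z₂, z₃⟩ := z
    have h4 : (a ^ 4) (QuotientAddGroup.mk (z₁, z₂, z₃)) =
        a (a (a (a (QuotientAddGroup.mk (z₁, z₂, z₃))))) := by
      rw [pow_succ, pow_succ, pow_succ, pow_one]; rfl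
    rw [h4]
    simp only [ha, neg_neg]
    show _ = QuotientAddGroup.mk (z₁, z₂, z₃)
    exact congrArg _ (triple_eq (by linear_combination (norm := abel) h₁) rfl rfl)
  have hb2 : b ^ 2 = 1 := by
    refine Equiv.ext fun x => ?_
    refine QuotientAddGroup.induction_on x fun z => ?_
    obtain ⟨z₁, z₂, z₃⟩ := z
    have h4 : (b ^ 2) (QuotientAddGroup.mk (z₁, z₂, z₃)) =
        b (b (QuotientAddGroup.mk (z₁, z₂, z₃))) := by
      rw [pow_succ, pow_one]; rfl
    rw [h4]
    simp only [hb, neg_neg]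
    show _ = QuotientAddGroup.mk (z₁, z₂, z₃)
    exact congrArg _ (triple_eq rfl (by linear_combination (norm := abel) h₂) (by abel))
  have hbab : b * a * b = a⁻¹ := by
    refine Equiv.ext fun x => ?_
    refine QuotientAddGroup.induction_on x fun z => ?_
    obtain ⟨z₁, z₂, z₃⟩ := z
    have hinv : a⁻¹ (QuotientAddGroup.mk (z₁, z₂, z₃)) =
        QuotientAddGroup.mk ((z₁ - τ₁, z₃, -z₂) : E₁ × E₂ × E₂) := by
      have haz : a (QuotientAddGroup.mk ((z₁ - τ₁, z₃, -z₂) : E₁ × E₂ × E₂)) =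
          QuotientAddGroup.mk ((z₁, z₂, z₃) : E₁ × E₂ × E₂) := by
        simp only [ha]
        exact congrArg _ (triple_eq (by abel) (neg_neg z₂) rfl)
      rw [← haz, Equiv.Perm.inv_def, Equiv.symm_apply_apply]
    show b (a (b (QuotientAddGroup.mk (z₁, z₂, z₃)))) = _
    rw [hinv]
    simp only [hb, ha]
    rw [QuotientAddGroup.eq_iff_sub_mem, mem_zmul_two hττ]
    right
    show ((-(-z₁ + τ₁) - (z₁ - τ₁), (-(-z₃ + τ₃) + τ₂) - z₃, (-(z₂ + τ₂) + τ₃) - -z₂) :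
        E₁ × E₂ × E₂) = (0, τ₂ + τ₃, τ₂ + τ₃)
    exact triple_eq (by abel) (by linear_combination (norm := abel) - h₃)
      (by linear_combination (norm := abel) - h₂)
  -- fixed-point-freeness of the seven nontrivial words
  have app2 : ∀ x, (a ^ 2) x = a (a x) := by
    intro x; rw [pow_succ, pow_one]; rfl
  have app3 : ∀ x, (a ^ 3) x = a (a (a x)) := by
    intro x; rw [pow_succ, pow_succ, pow_one]; rfl
  have Fa : ∀ x, a x ≠ x := by
    intro x
    refine QuotientAddGroup.induction_on x fun z => ?_
    obtain ⟨z₁, z₂, z₃⟩ := z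
    intro h
    rw [ha, QuotientAddGroup.eq_iff_sub_mem, mem_zmul_two hττ] at h
    simp only [Prod.mk_sub_mk, Prod.mk_eq_zero, Prod.mk.injEq] at h
    rcases h with ⟨e1, -, -⟩ | ⟨e1, -, -⟩ <;>
      exact h₁' (by linear_combination (norm := abel) e1 + e1)
  have Fa2 : ∀ x, (a ^ 2) x ≠ x := by
    intro x
    refine QuotientAddGroup.induction_on x fun z => ?_
    obtain ⟨z₁, z₂, z₃⟩ := z
    intro h
    rw [app2] at h
    simp only [ha, neg_neg] at h
    rw [QuotientAddGroup.eq_iff_sub_mem, mem_zmul_two hττ] at h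
    simp only [Prod.mk_sub_mk, Prod.mk_eq_zero, Prod.mk.injEq] at h
    rcases h with ⟨e1, -, -⟩ | ⟨e1, -, -⟩ <;>
      exact h₁' (by linear_combination (norm := abel) e1)
  have Fa3 : ∀ x, (a ^ 3) x ≠ x := by
    intro x
    refine QuotientAddGroup.induction_on x fun z => ?_
    obtain ⟨z₁, z₂, z₃⟩ := z
    intro h
    rw [app3] at h
    simp only [ha, neg_neg] at h
    rw [QuotientAddGroup.eq_iff_sub_mem, mem_zmul_two hττ] at h
    simp only [Prod.mk_sub_mk, Prod.mk_eq_zero, Prod.mk.injEq] at h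
    rcases h with ⟨e1, -, -⟩ | ⟨e1, -, -⟩ <;>
      exact h₁' (by linear_combination (norm := abel) h₁ + h₁ - e1 - e1)
  have Fb : ∀ x, b x ≠ x := by
    intro x
    refine QuotientAddGroup.induction_on x fun z => ?_
    obtain ⟨z₁, z₂, z₃⟩ := z
    intro h
    rw [hb, QuotientAddGroup.eq_iff_sub_mem, mem_zmul_two hττ] at h
    simp only [Prod.mk_sub_mk, Prod.mk_eq_zero, Prod.mk.injEq] at h
    rcases h with ⟨-, e2, -⟩ | ⟨-, e2, -⟩
    · exact h₂0 (by linear_combination (norm := abel) e2)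
    · exact h₃0 (by linear_combination (norm := abel) - e2)
  have Fab : ∀ x, (a * b) x ≠ x := by
    intro x
    refine QuotientAddGroup.induction_on x fun z => ?_
    obtain ⟨z₁, z₂, z₃⟩ := z
    intro h
    rw [Equiv.Perm.mul_apply] at h
    simp only [hb, ha, neg_neg] at h
    rw [QuotientAddGroup.eq_iff_sub_mem, mem_zmul_two hττ] at h
    simp only [Prod.mk_sub_mk, Prod.mk_eq_zero, Prod.mk.injEq] at h
    rcases h with ⟨-, e2, e3⟩ | ⟨-, e2, e3⟩
    · exact h₂₃ (by linear_combination (norm := abel) e2 + e3)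
    · exact h₂₃ (by linear_combination (norm := abel) e2 + e3 + h₂ + h₃)
  have Fa2b : ∀ x, (a ^ 2 * b) x ≠ x := by
    intro x
    refine QuotientAddGroup.induction_on x fun z => ?_
    obtain ⟨z₁, z₂, z₃⟩ := z
    intro h
    rw [Equiv.Perm.mul_apply, app2] at h
    simp only [hb, ha, neg_neg] at h
    rw [QuotientAddGroup.eq_iff_sub_mem, mem_zmul_two hττ] at h
    simp only [Prod.mk_sub_mk, Prod.mk_eq_zero, Prod.mk.injEq] at h
    rcases h with ⟨-, -, e3⟩ | ⟨-, -, e3⟩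
    · exact h₃0 (by linear_combination (norm := abel) - e3)
    · exact h₂0 (by linear_combination (norm := abel) - e3 - h₃)
  have Fa3b : ∀ x, (a ^ 3 * b) x ≠ x := by
    intro x
    refine QuotientAddGroup.induction_on x fun z => ?_
    obtain ⟨z₁, z₂, z₃⟩ := z
    intro h
    rw [Equiv.Perm.mul_apply, app3] at h
    simp only [hb, ha, neg_neg] at h
    rw [QuotientAddGroup.eq_iff_sub_mem, mem_zmul_two hττ] at h
    simp only [Prod.mk_sub_mk, Prod.mk_eq_zero, Prod.mk.injEq] at h
    rcases h with ⟨-, e2, e3⟩ | ⟨-, e2, e3⟩ <;>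
      exact hτne (by linear_combination (norm := abel) e2 - e3)
  -- a nonidentity criterion
  have hne : ∀ g : Equiv.Perm ((E₁ × E₂ × E₂) ⧸
      AddSubgroup.zmultiples ((0, τ₂ + τ₃, τ₂ + τ₃) : E₁ × E₂ × E₂)),
      (∀ x, g x ≠ x) → g ≠ 1 := by
    intro g hg h1
    exact hg (QuotientAddGroup.mk 0) (by rw [h1, Equiv.Perm.one_apply])
  -- group-theoretic bookkeeping
  have hb2' : b * b = 1 := by rw [← sq]; exact hb2
  have hainv : a⁻¹ = a ^ 3 := inv_eq_of_mul_eq_one_right (by rw [← pow_succ']; exact ha4)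
  have hab : a * b = b * a ^ 3 := by
    have h := hbab
    rw [mul_assoc] at h
    have h2 := congrArg (fun x => b * x) h
    rw [← mul_assoc, hb2', one_mul, hainv] at h2
    exact h2
  have hk : ∀ k : ℕ, a ^ k * b = b * a ^ (3 * k) := by
    intro k
    induction k with
    | zero => simp
    | succ n ih =>
      calc a ^ (n + 1) * b = a ^ n * (a * b) := by rw [pow_succ, mul_assoc]
        _ = a ^ n * b * a ^ 3 := by rw [hab, ← mul_assoc]
        _ = b * a ^ (3 * n) * a ^ 3 := by rw [ih]
        _ = b * a ^ (3 * (n + 1)) := by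
            rw [mul_assoc, ← pow_add, show 3 * n + 3 = 3 * (n + 1) by ring]
  have hmod : ∀ m n : ℕ, m % 4 = n % 4 → a ^ m = a ^ n := by
    intro m n h
    rw [← Nat.div_add_mod m 4, ← Nat.div_add_mod n 4, h]
    simp [pow_add, pow_mul, ha4]
  have hzadd : ∀ i j : ZMod 4, (i + j).val % 4 = (i.val + j.val) % 4 := by decide
  have hzsub : ∀ i j : ZMod 4, (j - i).val % 4 = (3 * i.val + j.val) % 4 := by decide
  -- the homomorphism from the dihedral group
  let F : DihedralGroup 4 → Equiv.Perm ((E₁ × E₂ × E₂) ⧸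
      AddSubgroup.zmultiples ((0, τ₂ + τ₃, τ₂ + τ₃) : E₁ × E₂ × E₂)) := fun x =>
    match x with
    | .r i => a ^ i.val
    | .sr i => b * a ^ i.val
  have hFmul : ∀ x y, F (x * y) = F x * F y := by
    rintro (i | i) (j | j)
    · show a ^ (i + j).val = a ^ i.val * a ^ j.val
      rw [← pow_add]
      exact hmod _ _ (hzadd i j)
    · show b * a ^ (j - i).val = a ^ i.val * (b * a ^ j.val)
      rw [← mul_assoc, hk, mul_assoc, ← pow_add]
      exact congrArg (fun x => b * x) (hmod _ _ (hzsub i j))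
    · show b * a ^ (i + j).val = b * a ^ i.val * a ^ j.val
      rw [mul_assoc, ← pow_add]
      exact congrArg (fun x => b * x) (hmod _ _ (hzadd i j))
    · show a ^ (j - i).val = b * a ^ i.val * (b * a ^ j.val)
      rw [mul_assoc b (a ^ i.val), ← mul_assoc (a ^ i.val) b (a ^ j.val), hk,
        mul_assoc b (a ^ (3 * i.val)) (a ^ j.val), ← mul_assoc b b, hb2', one_mul, ← pow_add]
      exact hmod _ _ (hzsub i j)
  let f : DihedralGroup 4 →* Equiv.Perm ((E₁ × E₂ × E₂) ⧸
      AddSubgroup.zmultiples ((0, τ₂ + τ₃, τ₂ + τ₃) : E₁ × E₂ × E₂)) :=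
    MonoidHom.mk' F hFmul
  -- the swap relations b * a^k = a^(...) * b
  have hba1 : b * a ^ 1 = a ^ 3 * b := by
    rw [hk 3]
    exact congrArg (fun x => b * x) (hmod 1 (3 * 3) (by norm_num))
  have hba2 : b * a ^ 2 = a ^ 2 * b := by
    rw [hk 2]
    exact congrArg (fun x => b * x) (hmod 2 (3 * 2) (by norm_num))
  have hba3 : b * a ^ 3 = a ^ 1 * b := by
    rw [hk 1, show 3 * 1 = 3 from rfl]
  -- injectivity
  have hinj : Function.Injective f := by
    refine (injective_iff_map_eq_one f).mpr ?_
    rintro (i | i) hx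
    · have hv : i.val < 4 := ZMod.val_lt i
      have hx' : a ^ i.val = 1 := hx
      have hval : i.val = 0 := by
        by_contra hne0
        have h4 : i.val = 1 ∨ i.val = 2 ∨ i.val = 3 := by omega
        rcases h4 with h | h | h <;> rw [h] at hx'
        · exact hne a Fa (by rwa [pow_one] at hx')
        · exact hne _ Fa2 hx'
        · exact hne _ Fa3 hx'
      rw [DihedralGroup.one_def, (ZMod.val_eq_zero i).mp hval]
    · exfalso
      have hv : i.val < 4 := ZMod.val_lt i
      have hx' : b * a ^ i.val = 1 := hx
      have h4 : i.val = 0 ∨ i.val = 1 ∨ i.val = 2 ∨ i.val = 3 := by omega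
      rcases h4 with h | h | h | h <;> rw [h] at hx'
      · rw [pow_zero, mul_one] at hx'
        exact hne b Fb hx'
      · rw [hba1] at hx'
        exact hne _ Fa3b hx'
      · rw [hba2] at hx'
        exact hne _ Fa2b hx'
      · rw [hba3, pow_one] at hx'
        exact hne _ Fab hx'
  -- range
  have haMem : a ∈ Subgroup.closure {a, b} := Subgroup.subset_closure (Set.mem_insert _ _)
  have hbMem : b ∈ Subgroup.closure {a, b} :=
    Subgroup.subset_closure (Set.mem_insert_of_mem _ rfl)
  have hrange : f.range = Subgroup.closure {a, b} := by
    apply le_antisymm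
    · rintro g hg
      obtain ⟨x, rfl⟩ := MonoidHom.mem_range.mp hg
      rcases x with i | i
      · exact pow_mem haMem _
      · exact mul_mem hbMem (pow_mem haMem _)
    · rw [Subgroup.closure_le]
      rintro g hg
      simp only [Set.mem_insert_iff, Set.mem_singleton_iff] at hg
      rcases hg with h | h
      · refine ⟨.r 1, ?_⟩
        rw [h]
        show a ^ (1 : ZMod 4).val = a
        rw [show (1 : ZMod 4).val = 1 from rfl, pow_one]
      · refine ⟨.sr 0, ?_⟩
        rw [h]
        show b * a ^ (0 : ZMod 4).val = b
        rw [show (0 : ZMod 4).val = 0 from rfl, pow_zero, mul_one]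
  have e := MonoidHom.ofInjective hinj
  have hcard : Nat.card (Subgroup.closure {a, b}) = 8 := by
    rw [← hrange, ← Nat.card_congr e.toEquiv, Nat.card_eq_fintype_card, DihedralGroup.card]
  refine ⟨a, b, ha, hb, ha4, hb2, hbab, hcard,
    ⟨(MulEquiv.subgroupCongr hrange).symm.trans e.symm⟩, ?_⟩
  -- freeness
  intro g hg hgne x
  rw [← hrange] at hg
  obtain ⟨y, rfl⟩ := MonoidHom.mem_range.mp hg
  rcases y with i | i
  · have hv : i.val < 4 := ZMod.val_lt i
    have hfr : f (.r i) = a ^ i.val := rfl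
    rw [hfr] at hgne ⊢
    have h4 : i.val = 0 ∨ i.val = 1 ∨ i.val = 2 ∨ i.val = 3 := by omega
    rcases h4 with h | h | h | h <;> rw [h] at hgne ⊢
    · exact absurd (pow_zero a) hgne
    · rw [pow_one]; exact Fa x
    · exact Fa2 x
    · exact Fa3 x
  · have hv : i.val < 4 := ZMod.val_lt i
    have hfsr : f (.sr i) = b * a ^ i.val := rfl
    rw [hfsr] at hgne ⊢
    have h4 : i.val = 0 ∨ i.val = 1 ∨ i.val = 2 ∨ i.val = 3 := by omega
    rcases h4 with h | h | h | h <;> rw [h] at hgne ⊢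
    · rw [pow_zero, mul_one]; exact Fb x
    · rw [hba1]; exact Fa3b x
    · rw [hba2]; exact Fa2b x
    · rw [hba3, pow_one]; exact Fab x
end

section
/- Let V be a vector space over ℝ (or over ℚ) and let T : V × V × V → ℝ be a symmetric trilinear form. Suppose F₁, F₂, F₃, H ∈ V satisfy T(F_i, F_i, H) = 0 for each i ∈ {1, 2, 3} and T(F_i, F_j, H) ≠ 0 for all i ≠ j. Then F₁, F₂, F₃ are linearly independent. -/
/-!
Pair a vanishing combination `∑ gᵢ Fᵢ = 0` with each `Fⱼ` under the bilinear form
`(x, y) ↦ T(x, y, H)`: the coefficient vector `g` lies in the kernel of the Gram matrix of the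
`Fᵢ`. That matrix is symmetric with zero diagonal, so its determinant is
`2 T(F₁,F₂,H) T(F₁,F₃,H) T(F₂,F₃,H) ≠ 0`, forcing `g = 0`.
-/

open Matrix

theorem Matrix.det_fin_three_of_isSymm_of_diag_eq_zero {R : Type*} [CommRing R]
    {M : Matrix (Fin 3) (Fin 3) R} (hM : M.IsSymm) (hdiag : ∀ i, M i i = 0) :
    M.det = 2 * M 0 1 * M 0 2 * M 1 2 := by
  have h10 : M 1 0 = M 0 1 := hM.apply 0 1
  have h20 : M 2 0 = M 0 2 := hM.apply 0 2
  have h21 : M 2 1 = M 1 2 := hM.apply 1 2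
  rw [det_fin_three, hdiag 0, hdiag 1, hdiag 2, h10, h20, h21]
  ring

theorem linearIndependent_of_det_gram_ne_zero {R V ι : Type*} [CommRing R] [NoZeroDivisors R]
    [AddCommGroup V] [Module R V] [Fintype ι] [DecidableEq ι]
    (B : V →ₗ[R] V →ₗ[R] R) {F : ι → V} (hdet : (of fun i j ↦ B (F i) (F j)).det ≠ 0) :
    LinearIndependent R F := by
  rw [Fintype.linearIndependent_iff]
  intro g hg
  have hker : g ᵥ* (of fun i j ↦ B (F i) (F j)) = 0 := by
    ext j
    simpa [vecMul, dotProduct, map_sum] using congrArg (fun v ↦ B v (F j)) hg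
  exact congrFun (eq_zero_of_vecMul_eq_zero hdet hker)

theorem stmt_16_general {V : Type*} [AddCommGroup V] [Module ℝ V]
    (T : V →ₗ[ℝ] V →ₗ[ℝ] V →ₗ[ℝ] ℝ)
    (hsymm₁ : ∀ x y z, T x y z = T y x z)
    (F : Fin 3 → V) (H : V)
    (h0 : ∀ i, T (F i) (F i) H = 0)
    (hne : ∀ i j, i ≠ j → T (F i) (F j) H ≠ 0) :
    LinearIndependent ℝ F := by
  refine linearIndependent_of_det_gram_ne_zero (T.compr₂ (LinearMap.applyₗ H)) ?_
  have hsymm : (of fun i j ↦ T.compr₂ (LinearMap.applyₗ H) (F i) (F j)).IsSymm :=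
    IsSymm.ext fun i j ↦ hsymm₁ (F j) (F i) H
  rw [det_fin_three_of_isSymm_of_diag_eq_zero hsymm h0]
  simp only [of_apply, LinearMap.compr₂_apply, LinearMap.applyₗ_apply_apply]
  exact mul_ne_zero (mul_ne_zero (mul_ne_zero two_ne_zero (hne 0 1 (by decide)))
    (hne 0 2 (by decide))) (hne 1 2 (by decide))

/-- Algebraic content of Claim (2.20): if a symmetric trilinear form `T`
satisfies `T(Fᵢ, Fᵢ, H) = 0` and `T(Fᵢ, Fⱼ, H) ≠ 0` for `i ≠ j`, then
`F₁, F₂, F₃` are linearly independent. -/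
theorem stmt_16 {V : Type*} [AddCommGroup V] [Module ℝ V]
    (T : V →ₗ[ℝ] V →ₗ[ℝ] V →ₗ[ℝ] ℝ)
    (hsymm₁ : ∀ x y z, T x y z = T y x z)
    (hsymm₂ : ∀ x y z, T x y z = T x z y)
    (F : Fin 3 → V) (H : V)
    (h0 : ∀ i, T (F i) (F i) H = 0)
    (hne : ∀ i j, i ≠ j → T (F i) (F j) H ≠ 0) :
    LinearIndependent ℝ F :=
  stmt_16_general T hsymm₁ F H h0 hne
end

section
/- Let SL(2, 𝔽₃) denote the group of 2 × 2 matrices of determinant 1 over the field with 3 elements (the binary tetrahedral group, isomorphic to Q₈ ⋊ C₃, of order 24). There is no injective group homomorphism ρ : SL(2, 𝔽₃) → SL(3, ℂ) such that every matrix in the image of ρ has 1 as an eigenvalue and the only vector v ∈ ℂ³ satisfying ρ(g)v = v for all g ∈ SL(2, 𝔽₃) is v = 0. -/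
/-!
`ρ(-1)` is a central involution, so `ℂ³` is the direct sum of its eigenspaces `W` (for `1`) and
`U` (for `-1`), both stable under the group; `W ≠ 0` since `ρ(-1)` fixes a vector and `U ≠ 0` since
`ρ(-1) ≠ 1`, so in dimension 3 one of them is a line. The group acts on that line through a
character, which is trivial on cubes because every cube in `SL(2, 𝔽₃)` is a commutator; as `-1` is
a cube, the line is `W`. If the character is trivial, `W` consists of invariant vectors. Otherwise
`χ g ≠ 1` for some `g`, and `-g⁴` fixes no nonzero vector: it acts on `W` by `χ g`, and on `U` as
`-ρ(g⁴)`, where `ρ(g⁴)³ = ρ(g¹²) = 1` rules out the eigenvalue `-1`.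
-/

open Module Module.End Set
open scoped commutatorElement

local notation "SL₂𝔽₃" => Matrix.SpecialLinearGroup (Fin 2) (ZMod 3)

theorem MonoidHom.map_commutatorElement_eq_one {G M : Type*} [Group G] [CommMonoid M]
    (f : G →* M) (a b : G) : f ⁅a, b⁆ = 1 := by
  rw [commutatorElement_def, map_mul, map_mul, map_mul,
    show f a * f b * f a⁻¹ * f b⁻¹ = f a * f a⁻¹ * (f b * f b⁻¹) by ac_rfl,
    ← map_mul, ← map_mul, mul_inv_cancel, mul_inv_cancel, map_one, one_mul]

section LinearAlgebra

theorem eq_zero_of_self_eq_neg (K : Type*) {V : Type*} [Field K] [NeZero (2 : K)]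
    [AddCommGroup V] [Module K V] {v : V} (h : v = -v) : v = 0 := by
  rw [eq_neg_iff_add_eq_zero, ← two_smul K] at h
  exact (smul_eq_zero.1 h).resolve_left two_ne_zero

variable {K V : Type*} [Field K] [NeZero (2 : K)] [AddCommGroup V] [Module K V]

theorem Module.End.isCompl_eigenspace_one_neg_one {T : End K V} (hT : T * T = 1) :
    IsCompl (eigenspace T 1) (eigenspace T (-1)) := by
  constructor
  · rw [Submodule.disjoint_def]
    intro v hv hv'
    rw [mem_eigenspace_iff, one_smul] at hv
    rw [mem_eigenspace_iff, hv, neg_one_smul] at hv'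
    exact eq_zero_of_self_eq_neg K hv'
  · rw [codisjoint_iff, eq_top_iff]
    intro v _
    have hTT : T (T v) = v := by rw [← mul_apply, hT, one_apply]
    refine Submodule.mem_sup.2 ⟨(2⁻¹ : K) • (v + T v), ?_, (2⁻¹ : K) • (v - T v), ?_, ?_⟩
    · rw [mem_eigenspace_iff, map_smul, map_add, hTT, add_comm, one_smul]
    · rw [mem_eigenspace_iff, map_smul, map_sub, hTT, neg_one_smul, ← smul_neg, neg_sub]
    · rw [← smul_add, add_add_sub_cancel, ← two_smul K, smul_smul, inv_mul_cancel₀ two_ne_zero,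
        one_smul]

end LinearAlgebra

theorem Module.End.eq_zero_of_apply_eq_self_of_isCompl {R M : Type*} [Ring R] [AddCommGroup M]
    [Module R M] {p q : Submodule R M} (hpq : IsCompl p q) {S : End R M} (hp : MapsTo S p p)
    (hq : MapsTo S q q) (hSp : ∀ x ∈ p, S x = x → x = 0) (hSq : ∀ y ∈ q, S y = y → y = 0)
    {v : M} (hv : S v = v) : v = 0 := by
  obtain ⟨x, hx, y, hy, rfl⟩ :=
    Submodule.mem_sup.1 (hpq.sup_eq_top ▸ Submodule.mem_top : v ∈ p ⊔ q)
  have hxy : S x - x = y - S y := by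
    rw [map_add] at hv
    rw [sub_eq_sub_iff_add_eq_add, hv, add_comm]
  have hx0 : S x - x = 0 := Submodule.disjoint_def.1 hpq.disjoint _ (p.sub_mem (hp hx) hx)
    (hxy ▸ q.sub_mem hy (hq hy))
  rw [hSp x hx (sub_eq_zero.1 hx0), hSq y hy (sub_eq_zero.1 (hxy ▸ hx0)).symm, add_zero]

theorem Submodule.exists_mem_ne_zero_of_finrank_eq_one {K V : Type*} [Field K] [AddCommGroup V]
    [Module K V] {L : Submodule K V} (hL : finrank K L = 1) : ∃ x ∈ L, x ≠ 0 :=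
  exists_mem_ne_zero_of_ne_bot (by rintro rfl; simp at hL)

theorem Representation.exists_monoidHom_apply_eq_smul_of_finrank_eq_one {K V G : Type*}
    [Field K] [AddCommGroup V] [Module K V] [Monoid G] (ρ : Representation K G V)
    {L : Submodule K V} (hL : finrank K L = 1) (hρL : ∀ g, MapsTo (ρ g) L L) :
    ∃ χ : G →* K, ∀ g, ∀ x ∈ L, ρ g x = χ g • x := by
  obtain ⟨w, hwL, hw0⟩ := Submodule.exists_mem_ne_zero_of_finrank_eq_one hL
  have hmem : ∀ x ∈ L, ∃ c : K, c • w = x := fun x hx => Submodule.mem_span_singleton.1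
    (eq_span_singleton_of_mem_of_finrank_eq_one hL hwL hw0 ▸ hx)
  choose χ hχ using fun g => hmem _ (hρL g hwL)
  have hinj := smul_left_injective K hw0
  let χ' : G →* K :=
    { toFun := χ
      map_one' := hinj (by simp only [hχ, map_one, one_apply, one_smul])
      map_mul' := fun g h => hinj (by
        dsimp only
        rw [hχ, map_mul, mul_apply, ← hχ h, map_smul, ← hχ g, smul_smul, mul_comm]) }
  refine ⟨χ', fun g x hx => ?_⟩
  obtain ⟨c, rfl⟩ := hmem x hx
  rw [map_smul, ← hχ g, smul_comm]
  rfl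

namespace SL2ZMod3

theorem neg_one_ne_one : (-1 : SL₂𝔽₃) ≠ 1 := by decide

theorem pow_twelve_eq_one : ∀ g : SL₂𝔽₃, g ^ 12 = 1 := by decide

theorem exists_pow_three_eq_neg_one : ∃ g : SL₂𝔽₃, g ^ 3 = -1 := by decide

theorem exists_commutatorElement_eq_pow_three : ∀ g : SL₂𝔽₃, ∃ a b : SL₂𝔽₃, g ^ 3 = ⁅a, b⁆ := by
  decide

theorem map_pow_three_eq_one {M : Type*} [CommMonoid M] (χ : SL₂𝔽₃ →* M) (g : SL₂𝔽₃) :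
    χ (g ^ 3) = 1 := by
  obtain ⟨a, b, hab⟩ := exists_commutatorElement_eq_pow_three g
  rw [hab, χ.map_commutatorElement_eq_one]

theorem map_neg_one_eq_one {M : Type*} [CommMonoid M] (χ : SL₂𝔽₃ →* M) : χ (-1) = 1 := by
  obtain ⟨g, hg⟩ := exists_pow_three_eq_neg_one
  rw [← hg, map_pow_three_eq_one]

variable {K V : Type*} [Field K] [AddCommGroup V] [Module K V] (ρ : Representation K SL₂𝔽₃ V)

theorem mapsTo_eigenspace_neg_one (g : SL₂𝔽₃) (μ : K) :
    MapsTo (ρ g) (eigenspace (ρ (-1)) μ) (eigenspace (ρ (-1)) μ) :=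
  mapsTo_genEigenspace_of_comm ((Commute.neg_one_left g).map ρ) μ 1

variable [NeZero (2 : K)]

theorem isCompl_eigenspace_neg_one :
    IsCompl (eigenspace (ρ (-1)) 1) (eigenspace (ρ (-1)) (-1)) :=
  isCompl_eigenspace_one_neg_one (by rw [← map_mul, neg_one_mul, neg_neg, map_one])

theorem finrank_eigenspace_neg_one_ne_one : finrank K (eigenspace (ρ (-1)) (-1)) ≠ 1 := by
  intro h
  obtain ⟨χ, hχ⟩ := ρ.exists_monoidHom_apply_eq_smul_of_finrank_eq_one h
    (mapsTo_eigenspace_neg_one ρ · (-1))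
  obtain ⟨u, hu, hu0⟩ := Submodule.exists_mem_ne_zero_of_finrank_eq_one h
  refine hu0 (eq_zero_of_self_eq_neg K ?_)
  rw [← neg_one_smul K u, ← mem_eigenspace_iff.1 hu, hχ (-1) u hu, map_neg_one_eq_one, one_smul]

theorem eq_zero_of_mem_eigenspace_neg_one_of_apply_eq_self (g : SL₂𝔽₃) {u : V}
    (hu : u ∈ eigenspace (ρ (-1)) (-1)) (hfix : ρ (-g ^ 4) u = u) : u = 0 := by
  have hgu : ρ (g ^ 4) u = -u := by
    rw [← neg_one_mul, map_mul, mul_apply,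
      mem_eigenspace_iff.1 (mapsTo_eigenspace_neg_one ρ (g ^ 4) (-1) hu), neg_one_smul] at hfix
    exact neg_eq_iff_eq_neg.1 hfix
  refine eq_zero_of_self_eq_neg K ?_
  calc u = ρ (g ^ 4 * g ^ 4 * g ^ 4) u := by
        rw [← pow_add, ← pow_add, pow_twelve_eq_one, map_one, one_apply]
    _ = -u := by simp only [map_mul, mul_apply, hgu, map_neg, neg_neg]

theorem exists_forall_apply_eq_self_of_finrank_eigenspace_one_eq_one
    (hW : finrank K (eigenspace (ρ (-1)) 1) = 1) (hfix : ∀ g, ∃ v ≠ 0, ρ g v = v) :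
    ∃ w ≠ 0, ∀ g, ρ g w = w := by
  obtain ⟨χ, hχ⟩ := ρ.exists_monoidHom_apply_eq_smul_of_finrank_eq_one hW
    (mapsTo_eigenspace_neg_one ρ · 1)
  obtain ⟨w, hwW, hw0⟩ := Submodule.exists_mem_ne_zero_of_finrank_eq_one hW
  by_cases hχ1 : ∀ g, χ g = 1
  · exact ⟨w, hw0, fun g => by rw [hχ g w hwW, hχ1, one_smul]⟩
  push Not at hχ1
  obtain ⟨g, hg⟩ := hχ1
  obtain ⟨v, hv0, hv⟩ := hfix (-g ^ 4)
  refine absurd (eq_zero_of_apply_eq_self_of_isCompl (isCompl_eigenspace_neg_one ρ)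
    (mapsTo_eigenspace_neg_one ρ _ 1) (mapsTo_eigenspace_neg_one ρ _ (-1)) ?_
    (fun u hu => eq_zero_of_mem_eigenspace_neg_one_of_apply_eq_self ρ g hu) hv) hv0
  intro x hx hxfix
  have hχg : χ (-g ^ 4) = χ g := by
    rw [← neg_one_mul, map_mul, map_neg_one_eq_one, one_mul, pow_succ, map_mul,
      map_pow_three_eq_one, one_mul]
  rw [hχ _ x hx, hχg] at hxfix
  have hx0 : (χ g - 1) • x = 0 := by rw [sub_smul, one_smul, hxfix, sub_self]
  exact (smul_eq_zero.1 hx0).resolve_left (sub_ne_zero.2 hg)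

theorem exists_forall_apply_eq_self (hV : finrank K V = 3) (hρ : ρ (-1) ≠ 1)
    (hfix : ∀ g, ∃ v ≠ 0, ρ g v = v) : ∃ w ≠ 0, ∀ g, ρ g w = w := by
  have : FiniteDimensional K V := .of_finrank_eq_succ hV
  have hsum := Submodule.finrank_add_eq_of_isCompl (isCompl_eigenspace_neg_one ρ)
  have hW0 : finrank K (eigenspace (ρ (-1)) 1) ≠ 0 := by
    obtain ⟨v, hv0, hv⟩ := hfix (-1)
    rw [Ne, Submodule.finrank_eq_zero]
    exact (Submodule.ne_bot_iff _).2 ⟨v, mem_eigenspace_iff.2 (by rw [hv, one_smul]), hv0⟩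
  have hW3 : finrank K (eigenspace (ρ (-1)) 1) < 3 := by
    refine (Submodule.finrank_lt fun htop => hρ (LinearMap.ext fun v => ?_)).trans_eq hV
    have hv : v ∈ eigenspace (ρ (-1)) 1 := by rw [htop]; exact Submodule.mem_top
    rw [mem_eigenspace_iff.1 hv, one_smul, one_apply]
  have hU1 := finrank_eigenspace_neg_one_ne_one ρ
  exact exists_forall_apply_eq_self_of_finrank_eigenspace_one_eq_one ρ (by omega) hfix

end SL2ZMod3

/-- Elimination of case (IV₂) in the proof of Lemma (2.15): there is no
injective homomorphism `ρ : SL(2, 𝔽₃) → SL(3, ℂ)` such that every matrix in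
the image has `1` as an eigenvalue while only `0` is invariant under the whole
image. -/
theorem stmt_18 :
    ¬ ∃ ρ : Matrix.SpecialLinearGroup (Fin 2) (ZMod 3) →*
        Matrix.SpecialLinearGroup (Fin 3) ℂ,
      Function.Injective ρ ∧
      (∀ g, ∃ v : Fin 3 → ℂ, v ≠ 0 ∧
        Matrix.mulVec (ρ g : Matrix (Fin 3) (Fin 3) ℂ) v = v) ∧
      (∀ v : Fin 3 → ℂ,
        (∀ g, Matrix.mulVec (ρ g : Matrix (Fin 3) (Fin 3) ℂ) v = v) → v = 0) := by
  rintro ⟨ρ, hinj, hfix, hinv⟩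
  -- `ρ' g v` unfolds to `ρ g *ᵥ v`, so `hfix` and `hinv` apply to `ρ'` as they stand.
  let ρ' : Representation ℂ SL₂𝔽₃ (Fin 3 → ℂ) :=
    (DistribMulAction.toModuleEnd ℂ (Fin 3 → ℂ)).comp ρ
  have hρ' : ρ' (-1) ≠ 1 := by
    refine fun h => SL2ZMod3.neg_one_ne_one (hinj ?_)
    rw [map_one]
    refine Matrix.SpecialLinearGroup.toLin'_injective (LinearEquiv.ext fun v => ?_)
    rw [map_one]
    exact LinearMap.congr_fun h v
  obtain ⟨w, hw0, hw⟩ := SL2ZMod3.exists_forall_apply_eq_self ρ' (by simp) hρ' hfix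
  exact hw0 (hinv w hw)
end
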